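/- arXiv:1105.2040 — 12 statements merged into one kernel-verified Lean document; each statement's English description precedes it below -/
import Mathlib

section
/- Let f be a symmetric submodular set function over a finite ground set V and let A_1, …, A_k be subsets of V. Then there exist sets A'_1, …, A'_k such that (i) A'_i ⊆ A_i for 1 ≤ i ≤ k, (ii) A'_1, …, A'_k are mutually disjoint, (iii) ∪_i A'_i = ∪_i A_i, and (iv) Σ_{i=1}^k f(A'_i) ≤ Σ_{i=1}^k f(A_i). -/
/-!
Symmetry and submodularity give posimodularity, `f (A \ B) + f (B \ A) ≤ f A + f B`: apply
submodularity to `A` and the complement of `B`, and symmetry to `B` and `B \ A`. Hence whenever two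
members `A i`, `A j` of the family meet, one of them can be replaced by its difference with the
other without increasing `∑ f` and without changing the union. Each such replacement strictly
decreases `∑ |A i|`, so iterating it terminates in a pairwise disjoint family.
-/

open Finset Function

theorem sdiff_add_sdiff_le_of_symm_submodular {V : Type*} [Fintype V] [DecidableEq V]
    {f : Finset V → ℝ}
    (hsub : ∀ A B : Finset V, f A + f B ≥ f (A ∪ B) + f (A ∩ B))
    (hsym : ∀ A : Finset V, f A = f (univ \ A)) (A B : Finset V) :
    f (A \ B) + f (B \ A) ≤ f A + f B := by
  have h := hsub A (univ \ B)
  rw [show A ∪ (univ \ B) = univ \ (B \ A) by ext; simp; tauto,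
    show A ∩ (univ \ B) = A \ B by ext; simp, ← hsym, ← hsym] at h
  linarith

section Uncrossing

variable {ι V : Type*} [Fintype ι] [DecidableEq V] {f : Finset V → ℝ}

def IsImprovingShrink (f : Finset V → ℝ) (B A : ι → Finset V) : Prop :=
  (∀ i, B i ⊆ A i) ∧ univ.biUnion B = univ.biUnion A ∧ ∑ i, f (B i) ≤ ∑ i, f (A i)

theorem IsImprovingShrink.refl (A : ι → Finset V) : IsImprovingShrink f A A :=
  ⟨fun _ => Subset.rfl, rfl, le_rfl⟩

theorem IsImprovingShrink.trans {A B C : ι → Finset V} (hCB : IsImprovingShrink f C B)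
    (hBA : IsImprovingShrink f B A) : IsImprovingShrink f C A :=
  ⟨fun i => (hCB.1 i).trans (hBA.1 i), hCB.2.1.trans hBA.2.1, hCB.2.2.trans hBA.2.2⟩

theorem biUnion_update_sdiff [DecidableEq ι] {A : ι → Finset V} {i j : ι} (hij : i ≠ j) :
    univ.biUnion (update A j (A j \ A i)) = univ.biUnion A := by
  ext x
  simp only [mem_biUnion, mem_univ, true_and]
  constructor
  · rintro ⟨l, hl⟩
    rcases eq_or_ne l j with rfl | hlj
    · exact ⟨l, (mem_sdiff.1 (by simpa using hl)).1⟩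
    · exact ⟨l, by simpa [hlj] using hl⟩
  · rintro ⟨l, hl⟩
    by_cases hxi : x ∈ A i
    · exact ⟨i, by simpa [hij] using hxi⟩
    · exact ⟨l, by rcases eq_or_ne l j with rfl | hlj <;> simp [*]⟩

theorem isImprovingShrink_update_sdiff [DecidableEq ι] {A : ι → Finset V} {i j : ι} (hij : i ≠ j)
    (hf : f (A j \ A i) ≤ f (A j)) : IsImprovingShrink f (update A j (A j \ A i)) A := by
  refine ⟨fun l => ?_, biUnion_update_sdiff hij, sum_le_sum fun l _ => ?_⟩ <;>
    rcases eq_or_ne l j with rfl | hlj <;> simp [*]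

theorem sum_card_update_sdiff_lt [DecidableEq ι] {A : ι → Finset V} {i j : ι}
    (hij : ¬Disjoint (A i) (A j)) : ∑ l, #(update A j (A j \ A i) l) < ∑ l, #(A l) := by
  refine sum_lt_sum (fun l _ => ?_) ⟨j, mem_univ j, ?_⟩
  · rcases eq_or_ne l j with rfl | hlj
    · simpa using card_le_card sdiff_subset
    · simp [hlj]
  · simpa using card_lt_card (sdiff_lt_left.2 hij)

theorem exists_isImprovingShrink_sum_card_lt [Fintype V] [DecidableEq ι]
    (hsub : ∀ A B : Finset V, f A + f B ≥ f (A ∪ B) + f (A ∩ B))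
    (hsym : ∀ A : Finset V, f A = f (univ \ A))
    {A : ι → Finset V} {i j : ι} (hne : i ≠ j) (hij : ¬Disjoint (A i) (A j)) :
    ∃ B, IsImprovingShrink f B A ∧ ∑ l, #(B l) < ∑ l, #(A l) := by
  rcases le_or_gt (f (A j \ A i)) (f (A j)) with h | h
  · exact ⟨_, isImprovingShrink_update_sdiff hne h, sum_card_update_sdiff_lt hij⟩
  · have := sdiff_add_sdiff_le_of_symm_submodular hsub hsym (A i) (A j)
    exact ⟨_, isImprovingShrink_update_sdiff hne.symm (by linarith),
      sum_card_update_sdiff_lt (disjoint_comm.not.1 hij)⟩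

theorem exists_pairwise_disjoint_isImprovingShrink [Fintype V]
    (hsub : ∀ A B : Finset V, f A + f B ≥ f (A ∪ B) + f (A ∩ B))
    (hsym : ∀ A : Finset V, f A = f (univ \ A)) (A : ι → Finset V) :
    ∃ B, IsImprovingShrink f B A ∧ Pairwise (Disjoint on B) := by
  classical
  induction h : ∑ l, #(A l) using Nat.strong_induction_on generalizing A with
  | _ n ih =>
  by_cases hA : Pairwise (Disjoint on A)
  · exact ⟨A, .refl A, hA⟩
  obtain ⟨i, j, hne, hij⟩ : ∃ i j, i ≠ j ∧ ¬Disjoint (A i) (A j) := by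
    simpa [Pairwise] using hA
  obtain ⟨B, hBA, hcard⟩ := exists_isImprovingShrink_sum_card_lt hsub hsym hne hij
  obtain ⟨C, hCB, hC⟩ := ih _ (h ▸ hcard) B rfl
  exact ⟨C, hCB.trans hBA, hC⟩

end Uncrossing

/-- **Uncrossing lemma for symmetric submodular functions.**
Let `f` be a symmetric submodular set function over a finite ground set `V`
and let `A_1, …, A_k ⊆ V`. Then there exist sets `A'_1, …, A'_k` such that
(i) `A'_i ⊆ A_i` for each `i`, (ii) the `A'_i` are mutually disjoint,
(iii) `⋃_i A'_i = ⋃_i A_i`, and (iv) `∑_i f(A'_i) ≤ ∑_i f(A_i)`. -/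
theorem uncross_symmetric_submodular
    {V : Type*} [Fintype V] [DecidableEq V] (f : Finset V → ℝ)
    (hsub : ∀ A B : Finset V, f A + f B ≥ f (A ∪ B) + f (A ∩ B))
    (hsym : ∀ A : Finset V, f A = f (Finset.univ \ A))
    (k : ℕ) (A : Fin k → Finset V) :
    ∃ A' : Fin k → Finset V,
      (∀ i, A' i ⊆ A i) ∧
      (∀ i j, i ≠ j → Disjoint (A' i) (A' j)) ∧
      (Finset.univ.biUnion A' = Finset.univ.biUnion A) ∧
      (∑ i, f (A' i) ≤ ∑ i, f (A i)) := by
  obtain ⟨A', ⟨hshrink, hunion, hsum⟩, hdisj⟩ :=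
    exists_pairwise_disjoint_isImprovingShrink hsub hsym A
  exact ⟨A', hshrink, fun _ _ hij => hdisj hij, hunion, hsum⟩
end

section
/- Let V be a finite set with |V| = n ≥ 1 and let f_1, …, f_k : 2^V → ℝ≥0 be non-negative monotone submodular functions with f_i(∅) = 0 for all i. Let x be a fractional allocation on V. Then there exist an index i ∈ {1, …, k} and a nonempty set S ⊆ V such that f_i(S)/|S| ≤ (Σ_{i=1}^k f̂_i(x_i)) / n; that is, min_{nonempty S ⊆ V, 1 ≤ i ≤ k} f_i(S)/|S| ≤ OPT_frac / n where OPT_frac = Σ_{i=1}^k f̂_i(x_i). -/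
open scoped BigOperators

/-- The Lovász extension `f̂(x) = ∫₀¹ f(x^θ) dθ`, where
`x^θ = {v ∈ V : x(v) ≥ θ}`. -/
noncomputable def lovasz {V : Type*} [Fintype V] (f : Finset V → ℝ) (x : V → ℝ) : ℝ :=
  ∫ θ in (0:ℝ)..1, f (Finset.univ.filter (fun v => θ ≤ x v))

/-- **Density bound for monotone MSCA.**
Let `V` be a finite set with `|V| = n ≥ 1` and let `f_1, …, f_k` be non-negative
monotone submodular set functions on `V` with `f_i(∅) = 0`. Let `x` be a fractional
allocation on `V` (`x(v,i) ∈ [0,1]`, `∑_i x(v,i) = 1`). Then there exist an index `i`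
and a nonempty set `S ⊆ V` with `f_i(S)/|S| ≤ (∑_{i=1}^k f̂_i(x_i)) / n`. -/
theorem monotone_msca_density_bound
    {V : Type*} [Fintype V] [DecidableEq V] (hn : 1 ≤ Fintype.card V)
    (k : ℕ) (f : Fin k → Finset V → ℝ)
    (hnonneg : ∀ i A, 0 ≤ f i A)
    (hmono : ∀ i, ∀ A B : Finset V, A ⊆ B → f i A ≤ f i B)
    (hsub : ∀ i, ∀ A B : Finset V, f i A + f i B ≥ f i (A ∪ B) + f i (A ∩ B))
    (hempty : ∀ i, f i ∅ = 0)
    (x : V → Fin k → ℝ)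
    (hx01 : ∀ v i, x v i ∈ Set.Icc (0:ℝ) 1)
    (hxsum : ∀ v, ∑ i, x v i = 1) :
    ∃ (i : Fin k) (S : Finset V), S.Nonempty ∧
      f i S / (S.card : ℝ) ≤
        (∑ i, lovasz (f i) (fun v => x v i)) / (Fintype.card V : ℝ) := by
  obtain ⟨v₀⟩ := Fintype.card_pos_iff.mp hn
  have hk : 0 < k := by
    rcases Nat.eq_zero_or_pos k with h | h
    · subst h; have := hxsum v₀; simp at this
    · exact h
  -- minimum density
  set T : Finset (Fin k × Finset V) :=
    Finset.univ.filter (fun p => p.2.Nonempty) with hT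
  have hTne : T.Nonempty := ⟨(⟨0, hk⟩, {v₀}), by simp [hT]⟩
  obtain ⟨p, hpT, hmin⟩ := T.exists_min_image (fun p => f p.1 p.2 / (p.2.card : ℝ)) hTne
  have hpne : p.2.Nonempty := by simpa [hT] using hpT
  set d : ℝ := f p.1 p.2 / (p.2.card : ℝ) with hd
  have hd0 : 0 ≤ d := div_nonneg (hnonneg _ _) (Nat.cast_nonneg _)
  -- pointwise bound
  have key : ∀ (i : Fin k) (θ : ℝ),
      d * ((Finset.univ.filter (fun v => θ ≤ x v i)).card : ℝ)
        ≤ f i (Finset.univ.filter (fun v => θ ≤ x v i)) := by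
    intro i θ
    set S := Finset.univ.filter (fun v => θ ≤ x v i) with hS
    rcases S.eq_empty_or_nonempty with h | h
    · simp [h, hempty i]
    · have hmem : (i, S) ∈ T := by simp [hT, h]
      have := hmin (i, S) hmem
      have hcard : (0:ℝ) < (S.card : ℝ) := by
        exact_mod_cast Finset.card_pos.mpr h
      calc d * (S.card : ℝ) ≤ (f i S / (S.card : ℝ)) * (S.card : ℝ) := by
            exact mul_le_mul_of_nonneg_right this hcard.le
        _ = f i S := div_mul_cancel₀ _ hcard.ne'
  -- antitonicity / integrability
  have hanti : ∀ i : Fin k,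
      Antitone (fun θ : ℝ => f i (Finset.univ.filter (fun v => θ ≤ x v i))) := by
    intro i θ₁ θ₂ hle
    refine hmono i _ _ (fun v hv => ?_)
    simp only [Finset.mem_filter] at hv ⊢
    exact ⟨hv.1, le_trans hle hv.2⟩
  have hantic : ∀ i : Fin k,
      Antitone (fun θ : ℝ => d * ((Finset.univ.filter (fun v => θ ≤ x v i)).card : ℝ)) := by
    intro i θ₁ θ₂ hle
    apply mul_le_mul_of_nonneg_left _ hd0
    have : (Finset.univ.filter (fun v => θ₂ ≤ x v i)) ⊆ (Finset.univ.filter (fun v => θ₁ ≤ x v i)) := by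
      intro v hv
      simp only [Finset.mem_filter] at hv ⊢
      exact ⟨hv.1, le_trans hle hv.2⟩
    exact_mod_cast Finset.card_le_card this
  -- integral of indicator
  have hind : ∀ (c : ℝ), c ∈ Set.Icc (0:ℝ) 1 →
      ∫ θ in (0:ℝ)..1, (if θ ≤ c then (1:ℝ) else 0) = c := by
    intro c hc
    have : (fun θ : ℝ => if θ ≤ c then (1:ℝ) else 0)
        = Set.indicator {x : ℝ | x ≤ c} (fun _ => (1:ℝ)) := by
      ext θ; simp [Set.indicator_apply]
    rw [this, intervalIntegral.integral_indicator hc]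
    simp
  -- lower bound each lovasz
  have hlow : ∀ i : Fin k, d * ∑ v, x v i ≤ lovasz (f i) (fun v => x v i) := by
    intro i
    have hint1 : IntervalIntegrable
        (fun θ : ℝ => d * ((Finset.univ.filter (fun v => θ ≤ x v i)).card : ℝ))
        MeasureTheory.volume 0 1 := (hantic i).intervalIntegrable
    have hint2 : IntervalIntegrable
        (fun θ : ℝ => f i (Finset.univ.filter (fun v => θ ≤ x v i)))
        MeasureTheory.volume 0 1 := (hanti i).intervalIntegrable
    have h1 : (∫ θ in (0:ℝ)..1, d * ((Finset.univ.filter (fun v => θ ≤ x v i)).card : ℝ))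
        ≤ lovasz (f i) (fun v => x v i) := by
      unfold lovasz
      exact intervalIntegral.integral_mono_on (by norm_num) hint1 hint2
        (fun θ _ => key i θ)
    have h2 : (∫ θ in (0:ℝ)..1, d * ((Finset.univ.filter (fun v => θ ≤ x v i)).card : ℝ))
        = d * ∑ v, x v i := by
      rw [intervalIntegral.integral_const_mul]
      congr 1
      have hcard : ∀ θ : ℝ, ((Finset.univ.filter (fun v => θ ≤ x v i)).card : ℝ)
          = ∑ v : V, (if θ ≤ x v i then (1:ℝ) else 0) := by
        intro θ
        rw [Finset.card_filter]
        push_cast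
        simp
      calc (∫ θ in (0:ℝ)..1, ((Finset.univ.filter (fun v => θ ≤ x v i)).card : ℝ))
          = ∫ θ in (0:ℝ)..1, ∑ v : V, (if θ ≤ x v i then (1:ℝ) else 0) := by
            simp_rw [hcard]
        _ = ∑ v : V, ∫ θ in (0:ℝ)..1, (if θ ≤ x v i then (1:ℝ) else 0) := by
            apply intervalIntegral.integral_finset_sum
            intro v _
            have : Antitone (fun θ : ℝ => if θ ≤ x v i then (1:ℝ) else 0) := by
              intro a b hab
              by_cases h : b ≤ x v i <;> simp [h, le_trans hab]
              · by_cases h' : a ≤ x v i <;> simp [h']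
            exact this.intervalIntegrable
        _ = ∑ v : V, x v i := by
            exact Finset.sum_congr rfl (fun v _ => hind _ (hx01 v i))
    linarith
  -- sum over i
  have htot : d * (Fintype.card V : ℝ) ≤ ∑ i, lovasz (f i) (fun v => x v i) := by
    have : ∑ i, d * ∑ v, x v i ≤ ∑ i, lovasz (f i) (fun v => x v i) :=
      Finset.sum_le_sum (fun i _ => hlow i)
    have heq : ∑ i : Fin k, d * ∑ v, x v i = d * (Fintype.card V : ℝ) := by
      rw [← Finset.mul_sum, Finset.sum_comm]
      simp [hxsum]
    linarith
  refine ⟨p.1, p.2, hpne, ?_⟩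
  rw [← hd, le_div_iff₀ (by exact_mod_cast hn)]
  exact htot
end

section
/- Let V be a finite set, let f_1, …, f_k : 2^V → ℝ≥0 be non-negative monotone submodular functions with f_i(∅) = 0 for all i, let x be a fractional allocation on V, and let U ⊆ V be nonempty. For i ∈ {1,…,k} and θ ∈ [0,1] let A(i,θ) = {v ∈ U : x(v,i) ≥ θ}. Then there exist i ∈ {1,…,k} and θ ∈ [0,1] such that A(i,θ) is nonempty and f_i(A(i,θ)) / |A(i,θ)| ≤ OPT_frac / |U|, where OPT_frac = Σ_{i=1}^k f̂_i(x_i). -/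
open scoped BigOperators

/-! If every nonempty `A(i,θ)` had ratio `f_i(A(i,θ)) / |A(i,θ)| > c := OPT_frac / |U|`, then,
using `f_i(∅) = 0` for the empty ones, `f_i(A(i,θ)) ≥ c |A(i,θ)|` for all `i` and `θ ∈ [0,1]`,
with strict inequality for `θ ∈ (0, x(v,i))` whenever `v ∈ U`. Integrating over `θ`, the right-hand
side integrates to `c ∑_{v ∈ U} x(v,i)`, which sums over `i` to `c |U| = OPT_frac`, while the
left-hand side integrates to at most `f̂_i(x_i)` by monotonicity. Since some `x(v,i)` with
`v ∈ U` is positive, this gives `OPT_frac < OPT_frac`. -/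

open Finset

theorem intervalIntegral_pos_of_nonneg_of_pos_on_Ioo {g : ℝ → ℝ} {a b c : ℝ}
    (hg : IntervalIntegrable g MeasureTheory.volume a b)
    (hnonneg : ∀ t ∈ Set.Icc a b, 0 ≤ g t)
    (hpos : ∀ t ∈ Set.Ioo a c, 0 < g t) (hac : a < c) (hcb : c ≤ b) :
    0 < ∫ t in a..b, g t := by
  rw [← intervalIntegral.integral_add_adjacent_intervals (hg.mono_set ?_) (hg.mono_set ?_)]
  · refine add_pos_of_pos_of_nonneg
      (intervalIntegral.intervalIntegral_pos_of_pos_on (hg.mono_set ?_) hpos hac) ?_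
    · rw [Set.uIcc_of_le hac.le, Set.uIcc_of_le (hac.le.trans hcb)]
      exact Set.Icc_subset_Icc_right hcb
    · exact intervalIntegral.integral_nonneg hcb
        fun t ht => hnonneg t ⟨hac.le.trans ht.1, ht.2⟩
  all_goals
    rw [Set.uIcc_of_le (hac.le.trans hcb)]
    apply Set.uIcc_subset_Icc <;> constructor <;> linarith

theorem integral_zero_one_ite_le (a : ℝ) (ha : a ∈ Set.Icc (0:ℝ) 1) :
    ∫ θ in (0:ℝ)..1, (if θ ≤ a then (1:ℝ) else 0) = a := by
  have : (fun θ : ℝ => if θ ≤ a then (1:ℝ) else 0) = {θ : ℝ | θ ≤ a}.indicator 1 := by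
    ext θ; simp [Set.indicator_apply]
  simp [this, intervalIntegral.integral_indicator ha]

section LevelSet

variable {V : Type*}

/-- `levelSet U (x · i) θ` is the set `A(i,θ)` of the statement. -/
noncomputable def levelSet (U : Finset V) (y : V → ℝ) (θ : ℝ) : Finset V :=
  U.filter (θ ≤ y ·)

variable {U : Finset V} {y : V → ℝ}

theorem levelSet_antitone : Antitone (levelSet U y) :=
  fun _ _ h => monotone_filter_right U fun _ _ hv => h.trans hv

theorem integral_card_levelSet (hy : ∀ v ∈ U, y v ∈ Set.Icc (0:ℝ) 1) :
    ∫ θ in (0:ℝ)..1, ((levelSet U y θ).card : ℝ) = ∑ v ∈ U, y v := by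
  have hcard : ∀ θ : ℝ,
      ((levelSet U y θ).card : ℝ) = ∑ v ∈ U, if θ ≤ y v then (1:ℝ) else 0 := by
    intro θ; simp only [levelSet, natCast_card_filter]
  simp_rw [hcard]
  rw [intervalIntegral.integral_finsetSum]
  · exact sum_congr rfl fun v hv => integral_zero_one_ite_le _ (hy v hv)
  · intro v _
    refine Antitone.intervalIntegrable fun s t hst => ?_
    split_ifs <;> grind

theorem intervalIntegrable_comp_levelSet {f : Finset V → ℝ} (hf : Monotone f) (a b : ℝ) :
    IntervalIntegrable (fun θ => f (levelSet U y θ)) MeasureTheory.volume a b :=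
  (hf.comp_antitone levelSet_antitone).intervalIntegrable

theorem integral_levelSet_le_lovasz [Fintype V] {f : Finset V → ℝ} (hf : Monotone f) :
    ∫ θ in (0:ℝ)..1, f (levelSet U y θ) ≤ lovasz f y :=
  intervalIntegral.integral_mono_on zero_le_one (intervalIntegrable_comp_levelSet hf 0 1)
    (intervalIntegrable_comp_levelSet (U := univ) hf 0 1)
    fun _ _ => hf (filter_subset_filter _ (subset_univ U))

theorem intervalIntegrable_card_levelSet (a b : ℝ) :
    IntervalIntegrable (fun θ => ((levelSet U y θ).card : ℝ)) MeasureTheory.volume a b :=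
  (Monotone.comp_antitone (fun _ _ h => Nat.cast_le.mpr (Finset.card_le_card h))
    levelSet_antitone).intervalIntegrable

variable {f : Finset V → ℝ} {c : ℝ}

theorem sub_mul_card_pos_of_lt_div {A : Finset V} (hA : A.Nonempty) (hc : c < f A / A.card) :
    0 < f A - c * A.card := by
  rw [lt_div_iff₀ (by exact_mod_cast hA.card_pos)] at hc
  exact sub_pos.mpr hc

theorem sub_mul_card_nonneg_of_lt_div (hempty : f ∅ = 0) {A : Finset V}
    (hc : A.Nonempty → c < f A / A.card) : 0 ≤ f A - c * A.card := by
  rcases A.eq_empty_or_nonempty with rfl | hA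
  · simp [hempty]
  · exact (sub_mul_card_pos_of_lt_div hA (hc hA)).le

theorem intervalIntegrable_sub_mul_card_levelSet (hf : Monotone f) (a b : ℝ) :
    IntervalIntegrable (fun θ => f (levelSet U y θ) - c * (levelSet U y θ).card)
      MeasureTheory.volume a b :=
  (intervalIntegrable_comp_levelSet hf a b).sub
    ((intervalIntegrable_card_levelSet a b).const_mul c)

theorem integral_sub_mul_card_levelSet (hf : Monotone f)
    (hy : ∀ v ∈ U, y v ∈ Set.Icc (0:ℝ) 1) :
    ∫ θ in (0:ℝ)..1, (f (levelSet U y θ) - c * (levelSet U y θ).card)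
      = (∫ θ in (0:ℝ)..1, f (levelSet U y θ)) - c * ∑ v ∈ U, y v := by
  rw [intervalIntegral.integral_sub (intervalIntegrable_comp_levelSet hf 0 1)
    ((intervalIntegrable_card_levelSet 0 1).const_mul c),
    intervalIntegral.integral_const_mul, integral_card_levelSet hy]

theorem mul_sum_le_integral_levelSet (hf : Monotone f) (hempty : f ∅ = 0)
    (hy : ∀ v ∈ U, y v ∈ Set.Icc (0:ℝ) 1)
    (hc : ∀ θ ∈ Set.Icc (0:ℝ) 1, (levelSet U y θ).Nonempty →
      c < f (levelSet U y θ) / (levelSet U y θ).card) :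
    c * ∑ v ∈ U, y v ≤ ∫ θ in (0:ℝ)..1, f (levelSet U y θ) := by
  rw [← sub_nonneg, ← integral_sub_mul_card_levelSet hf hy]
  exact intervalIntegral.integral_nonneg zero_le_one
    fun θ hθ => sub_mul_card_nonneg_of_lt_div hempty (hc θ hθ)

theorem mul_sum_lt_integral_levelSet (hf : Monotone f) (hempty : f ∅ = 0)
    (hy : ∀ v ∈ U, y v ∈ Set.Icc (0:ℝ) 1)
    (hc : ∀ θ ∈ Set.Icc (0:ℝ) 1, (levelSet U y θ).Nonempty →
      c < f (levelSet U y θ) / (levelSet U y θ).card)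
    {v₀ : V} (hv₀ : v₀ ∈ U) (hpos : 0 < y v₀) :
    c * ∑ v ∈ U, y v < ∫ θ in (0:ℝ)..1, f (levelSet U y θ) := by
  have hne : ∀ θ ∈ Set.Ioo 0 (y v₀), (levelSet U y θ).Nonempty :=
    fun θ hθ => ⟨v₀, mem_filter.mpr ⟨hv₀, hθ.2.le⟩⟩
  have hIcc : ∀ θ ∈ Set.Ioo 0 (y v₀), θ ∈ Set.Icc (0:ℝ) 1 :=
    fun θ hθ => ⟨hθ.1.le, hθ.2.le.trans (hy v₀ hv₀).2⟩
  rw [← sub_pos, ← integral_sub_mul_card_levelSet hf hy]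
  exact intervalIntegral_pos_of_nonneg_of_pos_on_Ioo
    (intervalIntegrable_sub_mul_card_levelSet hf 0 1)
    (fun θ hθ => sub_mul_card_nonneg_of_lt_div hempty (hc θ hθ))
    (fun θ hθ => sub_mul_card_pos_of_lt_div (hne θ hθ) (hc θ (hIcc θ hθ) (hne θ hθ)))
    hpos (hy v₀ hv₀).2

end LevelSet

theorem monotone_msca_greedy_main_general
    {V : Type*} [Fintype V]
    (k : ℕ) (f : Fin k → Finset V → ℝ)
    (hmono : ∀ i, ∀ A B : Finset V, A ⊆ B → f i A ≤ f i B)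
    (hempty : ∀ i, f i ∅ = 0)
    (x : V → Fin k → ℝ)
    (hx01 : ∀ v i, x v i ∈ Set.Icc (0:ℝ) 1)
    (hxsum : ∀ v, ∑ i, x v i = 1)
    (U : Finset V) (hU : U.Nonempty) :
    ∃ (i : Fin k) (θ : ℝ), θ ∈ Set.Icc (0:ℝ) 1 ∧
      (U.filter (fun v => θ ≤ x v i)).Nonempty ∧
      f i (U.filter (fun v => θ ≤ x v i)) / ((U.filter (fun v => θ ≤ x v i)).card : ℝ)
        ≤ (∑ i, lovasz (f i) (fun v => x v i)) / (U.card : ℝ) := by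
  by_contra! hratio
  set OPT := ∑ i, lovasz (f i) (fun v => x v i)
  have hf : ∀ i, Monotone (f i) := fun i A B h => hmono i A B h
  have hUpos : (0:ℝ) < U.card := by exact_mod_cast hU.card_pos
  obtain ⟨v₀, hv₀⟩ := hU
  obtain ⟨i₀, -, hi₀⟩ : ∃ i ∈ univ, (0:ℝ) < x v₀ i :=
    exists_lt_of_sum_lt (by simp [hxsum])
  have hmass : ∑ i, ∑ v ∈ U, x v i = U.card := by
    rw [sum_comm]; simp [hxsum]
  refine lt_irrefl OPT ?_
  calc OPT = ∑ i, OPT / U.card * ∑ v ∈ U, x v i := by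
        rw [← mul_sum, hmass, div_mul_cancel₀ _ hUpos.ne']
    _ < ∑ i, ∫ θ in (0:ℝ)..1, f i (levelSet U (x · i) θ) :=
        sum_lt_sum
          (fun i _ => mul_sum_le_integral_levelSet (hf i) (hempty i) (fun v _ => hx01 v i)
            (hratio i))
          ⟨i₀, mem_univ _, mul_sum_lt_integral_levelSet (hf i₀) (hempty i₀)
            (fun v _ => hx01 v i₀) (hratio i₀) hv₀ hi₀⟩
    _ ≤ OPT := sum_le_sum fun i _ => integral_levelSet_le_lovasz (hf i)

/-- **Main greedy lemma for monotone MSCA.**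
Let `f_1, …, f_k` be non-negative monotone submodular functions on a finite set `V`
with `f_i(∅) = 0`, let `x` be a fractional allocation on `V`, and let `U ⊆ V` be
nonempty. For `i` and `θ ∈ [0,1]`, let `A(i,θ) = {v ∈ U : x(v,i) ≥ θ}`. Then there
exist `i` and `θ ∈ [0,1]` such that `A(i,θ)` is nonempty and
`f_i(A(i,θ)) / |A(i,θ)| ≤ OPT_frac / |U|`, where `OPT_frac = ∑_i f̂_i(x_i)`. -/
theorem monotone_msca_greedy_main
    {V : Type*} [Fintype V] [DecidableEq V]
    (k : ℕ) (f : Fin k → Finset V → ℝ)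
    (hnonneg : ∀ i A, 0 ≤ f i A)
    (hmono : ∀ i, ∀ A B : Finset V, A ⊆ B → f i A ≤ f i B)
    (hsub : ∀ i, ∀ A B : Finset V, f i A + f i B ≥ f i (A ∪ B) + f i (A ∩ B))
    (hempty : ∀ i, f i ∅ = 0)
    (x : V → Fin k → ℝ)
    (hx01 : ∀ v i, x v i ∈ Set.Icc (0:ℝ) 1)
    (hxsum : ∀ v, ∑ i, x v i = 1)
    (U : Finset V) (hU : U.Nonempty) :
    ∃ (i : Fin k) (θ : ℝ), θ ∈ Set.Icc (0:ℝ) 1 ∧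
      (U.filter (fun v => θ ≤ x v i)).Nonempty ∧
      f i (U.filter (fun v => θ ≤ x v i)) / ((U.filter (fun v => θ ≤ x v i)).card : ℝ)
        ≤ (∑ i, lovasz (f i) (fun v => x v i)) / (U.card : ℝ) :=
  monotone_msca_greedy_main_general k f hmono hempty x hx01 hxsum U hU
end

section
/- Let e be a finite nonempty set of vertices and let x : e × {1,…,k} → [0,1] satisfy Σ_{i=1}^k x(v,i) = 1 for every v ∈ e. For each i let d(e,i) = max_{v ∈ e} x(v,i) − min_{v ∈ e} x(v,i), and let d(e) = Σ_{i=1}^k d(e,i). Then for every i ∈ {1,…,k}, d(e,i) ≤ d(e)/2. -/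
open scoped BigOperators

/-- `max_{v ∈ e} g(v)` (with junk value `0` for `e = ∅`). -/
noncomputable def fmax {V : Type*} (e : Finset V) (g : V → ℝ) : ℝ :=
  if h : e.Nonempty then e.sup' h g else 0

/-- `min_{v ∈ e} g(v)` (with junk value `0` for `e = ∅`). -/
noncomputable def fmin {V : Type*} (e : Finset V) (g : V → ℝ) : ℝ :=
  if h : e.Nonempty then e.inf' h g else 0

/-- **No label contributes more than half of `d(e)`.**
Let `e` be a finite nonempty set of vertices and let `x : e × {1,…,k} → [0,1]`
with `∑_i x(v,i) = 1` for every `v ∈ e`. With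
`d(e,i) = max_{v∈e} x(v,i) − min_{v∈e} x(v,i)` and `d(e) = ∑_i d(e,i)`:
for every `i`, `d(e,i) ≤ d(e)/2`. -/
theorem interval_distance_half
    {V : Type*} [DecidableEq V] (e : Finset V) (he : e.Nonempty)
    (k : ℕ) (x : V → Fin k → ℝ)
    (hx01 : ∀ v ∈ e, ∀ i, x v i ∈ Set.Icc (0:ℝ) 1)
    (hxsum : ∀ v ∈ e, ∑ i, x v i = 1) :
    ∀ i : Fin k,
      fmax e (fun v => x v i) - fmin e (fun v => x v i)
        ≤ (∑ j, (fmax e (fun v => x v j) - fmin e (fun v => x v j))) / 2 := by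
  intro i
  set d : Fin k → ℝ := fun j => fmax e (fun v => x v j) - fmin e (fun v => x v j) with hd
  have hfmax : ∀ j, fmax e (fun v => x v j) = e.sup' he (fun v => x v j) := by
    intro j; simp [fmax, he]
  have hfmin : ∀ j, fmin e (fun v => x v j) = e.inf' he (fun v => x v j) := by
    intro j; simp [fmin, he]
  obtain ⟨u, hu, hux⟩ := Finset.exists_mem_eq_sup' he (fun v => x v i)
  obtain ⟨w, hw, hwx⟩ := Finset.exists_mem_eq_inf' he (fun v => x v i)
  have hterm : ∀ j, x w j - x u j ≤ d j := by
    intro j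
    have h1 : x w j ≤ e.sup' he (fun v => x v j) := Finset.le_sup' (fun v => x v j) hw
    have h2 : e.inf' he (fun v => x v j) ≤ x u j := Finset.inf'_le _ hu
    simp only [hd, hfmax, hfmin]
    linarith
  have hsum : x u i - x w i = ∑ j ∈ Finset.univ.erase i, (x w j - x u j) := by
    have h1 : ∑ j, x u j = 1 := hxsum u hu
    have h2 : ∑ j, x w j = 1 := hxsum w hw
    have e1 : ∑ j, x u j = x u i + ∑ j ∈ Finset.univ.erase i, x u j :=
      (Finset.add_sum_erase _ _ (Finset.mem_univ i)).symm
    have e2 : ∑ j, x w j = x w i + ∑ j ∈ Finset.univ.erase i, x w j :=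
      (Finset.add_sum_erase _ _ (Finset.mem_univ i)).symm
    rw [Finset.sum_sub_distrib]
    linarith
  have hdi : d i ≤ ∑ j ∈ Finset.univ.erase i, d j := by
    have : d i = x u i - x w i := by simp [hd, hfmax, hfmin, ← hux, ← hwx]
    rw [this, hsum]
    exact Finset.sum_le_sum fun j _ => hterm j
  have htotal : ∑ j, d j = d i + ∑ j ∈ Finset.univ.erase i, d j :=
    (Finset.add_sum_erase _ _ (Finset.mem_univ i)).symm
  have : d i ≤ (∑ j, d j) / 2 := by clear_value d; rw [htotal]; linarith
  simpa [hd] using this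
end

section
/- Let V be a finite set, let x be a fractional allocation on V, and let e ⊆ V be a nonempty hyperedge. For each i ∈ {1,…,k} and θ ∈ [0,1] let A(i,θ) = {v ∈ V : x(v,i) ≥ θ}, let d(e,i) = max_{v ∈ e} x(v,i) − min_{v ∈ e} x(v,i), and let i* be an index achieving max_i max_{v ∈ e} x(v,i). Then the Lebesgue measure of the set of θ ∈ [0,1] for which e crosses the set V \ (A(1,θ) ∪ ⋯ ∪ A(k,θ)) is at most d(e, i*). (A hyperedge e crosses a set A if e ∩ A ≠ ∅ and e ⊄ A.) -/
open scoped BigOperators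

/-- **Probability that a hyperedge crosses the leftover set.**
Let `x` be a fractional allocation on a finite set `V` and let `e ⊆ V` be a nonempty
hyperedge. For `θ ∈ [0,1]` let `A(i,θ) = {v : x(v,i) ≥ θ}`, let
`d(e,i) = max_{v∈e} x(v,i) − min_{v∈e} x(v,i)`, and let `i*` achieve
`max_i max_{v∈e} x(v,i)`. Then the Lebesgue measure of the set of `θ ∈ [0,1]` for
which `e` crosses `V \ (A(1,θ) ∪ ⋯ ∪ A(k,θ))` is at most `d(e, i*)`.
(`e` crosses `A` if `e ∩ A ≠ ∅` and `e ⊄ A`.) -/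
theorem leftover_cross_probability
    {V : Type*} [Fintype V] [DecidableEq V]
    (k : ℕ) (x : V → Fin k → ℝ)
    (hx01 : ∀ v i, x v i ∈ Set.Icc (0:ℝ) 1)
    (hxsum : ∀ v, ∑ i, x v i = 1)
    (e : Finset V) (he : e.Nonempty)
    (istar : Fin k)
    (histar : ∀ i, fmax e (fun v => x v i) ≤ fmax e (fun v => x v istar)) :
    MeasureTheory.volume
      {θ : ℝ | θ ∈ Set.Icc (0:ℝ) 1 ∧
        (let B : Finset V :=
          Finset.univ \ Finset.univ.biUnion
            (fun i : Fin k => Finset.univ.filter (fun v => θ ≤ x v i));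
        (e ∩ B).Nonempty ∧ ¬ e ⊆ B)}
      ≤ ENNReal.ofReal (fmax e (fun v => x v istar) - fmin e (fun v => x v istar)) := by
  classical
  have hk : Nonempty (Fin k) := ⟨istar⟩
  set m : V → ℝ := fun v => Finset.univ.sup' Finset.univ_nonempty (fun i => x v i) with hm
  set M : ℝ := e.sup' he (fun v => x v istar) with hM
  set c : ℝ := e.inf' he m with hc
  have hMx : fmax e (fun v => x v istar) = M := by simp [fmax, he, hM]
  have hLc : fmin e (fun v => x v istar) ≤ c := by
    rw [fmin, dif_pos he]
    apply Finset.le_inf'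
    intro v hv
    exact le_trans (Finset.inf'_le _ hv) (Finset.le_sup' _ (Finset.mem_univ istar))
  have hsub : {θ : ℝ | θ ∈ Set.Icc (0:ℝ) 1 ∧
        (let B : Finset V :=
          Finset.univ \ Finset.univ.biUnion
            (fun i : Fin k => Finset.univ.filter (fun v => θ ≤ x v i));
        (e ∩ B).Nonempty ∧ ¬ e ⊆ B)} ⊆ Set.Ioc c M := by
    intro θ hθ
    obtain ⟨hθ01, hne, hnsub⟩ := hθ
    have hmemB : ∀ v : V, (v ∈ Finset.univ \ Finset.univ.biUnion
        (fun i : Fin k => Finset.univ.filter (fun v => θ ≤ x v i))) ↔ ∀ i, x v i < θ := by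
      intro v
      simp [not_le]
    constructor
    · obtain ⟨v, hv⟩ := hne
      have hve : v ∈ e := (Finset.mem_inter.mp hv).1
      have hvB := (hmemB v).mp (Finset.mem_inter.mp hv).2
      have : m v < θ := by
        rw [hm]
        exact (Finset.sup'_lt_iff _).mpr fun i _ => hvB i
      exact lt_of_le_of_lt (Finset.inf'_le _ hve) this
    · obtain ⟨w, hwe, hwB⟩ := Finset.not_subset.mp hnsub
      have : ∃ i, θ ≤ x w i := by
        by_contra h
        push_neg at h
        exact hwB ((hmemB w).mpr h)
      obtain ⟨i, hi⟩ := this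
      have h1 : θ ≤ fmax e (fun v => x v i) := by
        rw [fmax, dif_pos he]
        exact le_trans hi (Finset.le_sup' (fun v => x v i) hwe)
      calc θ ≤ fmax e (fun v => x v i) := h1
        _ ≤ fmax e (fun v => x v istar) := histar i
        _ = M := hMx
  calc MeasureTheory.volume _ ≤ MeasureTheory.volume (Set.Ioc c M) :=
        MeasureTheory.measure_mono hsub
    _ = ENNReal.ofReal (M - c) := by rw [Real.volume_Ioc]
    _ ≤ _ := by
        rw [hMx]
        exact ENNReal.ofReal_le_ofReal (by linarith)
end

section
/- Let (V, E) be a hypergraph with non-negative hyperedge weights w, where each hyperedge e has a fixed representative r(e) ∈ e, and let f be the hypergraph separation cost function f(A) = Σ_{e : r(e) ∈ A, e ⊄ A} w(e). Let x be a fractional allocation on V. For each hyperedge e and each i let d(e,i) = x(r(e), i) − min_{v ∈ e} x(v,i), and let d(e) = Σ_{i=1}^k d(e,i). Then Σ_{i=1}^k f̂(x_i) = Σ_{e ∈ E} w(e) d(e). -/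
open scoped BigOperators

/-- The hypergraph separation cost function with representatives `r`:
`f(A) = ∑_{e : r(e) ∈ A, e ⊄ A} w(e)`. -/
noncomputable def hypergraphSep {V : Type*} [DecidableEq V]
    (E : Finset (Finset V)) (w : Finset V → ℝ) (r : Finset V → V) (A : Finset V) : ℝ :=
  ∑ e ∈ E.filter (fun e => r e ∈ A ∧ ¬ e ⊆ A), w e

/-!
Both sides are sums over hyperedges. For a single hyperedge `e` and a threshold `θ`, the
superlevel set `x^θ` contains `r(e)` but not all of `e` exactly when
`min_{v ∈ e} x(v) < θ ≤ x(r(e))`, so the Lovász extension of the cost of `e` integrates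
`w(e)` over an interval of length `d(e,i)`. Linearity of the integral and exchanging the
sums over `i` and `e` finish the proof.
-/

open MeasureTheory Set

section Lovasz

variable {V : Type*} [Fintype V]

theorem lovasz_finset_sum {ι : Type*} (s : Finset ι) (f : ι → Finset V → ℝ) (x : V → ℝ)
    (hf : ∀ i ∈ s, IntervalIntegrable
      (fun θ => f i (Finset.univ.filter fun v => θ ≤ x v)) volume 0 1) :
    lovasz (fun A => ∑ i ∈ s, f i A) x = ∑ i ∈ s, lovasz (f i) x :=
  intervalIntegral.integral_finsetSum hf

end Lovasz

section Fmin

variable {V : Type*} {e : Finset V} {g : V → ℝ}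

theorem fmin_le {v : V} (hv : v ∈ e) : fmin e g ≤ g v := by
  rw [fmin, dif_pos ⟨v, hv⟩]
  exact Finset.inf'_le _ hv

theorem le_fmin (hne : e.Nonempty) {a : ℝ} (ha : ∀ v ∈ e, a ≤ g v) : a ≤ fmin e g := by
  rw [fmin, dif_pos hne]
  exact Finset.le_inf' hne _ ha

theorem fmin_lt_iff (hne : e.Nonempty) {θ : ℝ} : fmin e g < θ ↔ ∃ v ∈ e, g v < θ := by
  rw [fmin, dif_pos hne, Finset.inf'_lt_iff]

end Fmin

theorem intervalIntegral_indicator_Ioc_const {a b : ℝ} (c : ℝ) (ha : 0 ≤ a) (hab : a ≤ b)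
    (hb : b ≤ 1) :
    ∫ θ in (0:ℝ)..1, (Ioc a b).indicator (fun _ => c) θ = c * (b - a) := by
  rw [intervalIntegral.integral_of_le zero_le_one, setIntegral_indicator measurableSet_Ioc,
    inter_eq_self_of_subset_right (Ioc_subset_Ioc ha hb), setIntegral_const,
    Real.volume_real_Ioc_of_le hab, smul_eq_mul, mul_comm]

section Edge

variable {V : Type*} [Fintype V] [DecidableEq V] {e : Finset V} {r : V}

theorem edgeCost_superlevel_eq_indicator (hr : r ∈ e) (c : ℝ) (x : V → ℝ) :
    (fun θ : ℝ => if r ∈ Finset.univ.filter (fun v => θ ≤ x v) ∧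
        ¬ e ⊆ Finset.univ.filter (fun v => θ ≤ x v) then c else 0)
      = (Ioc (fmin e x) (x r)).indicator (fun _ => c) := by
  funext θ
  have hcut : ¬ e ⊆ Finset.univ.filter (fun v => θ ≤ x v) ↔ fmin e x < θ := by
    simp [fmin_lt_iff ⟨r, hr⟩, Finset.subset_iff]
  simp only [indicator_apply, mem_Ioc, hcut, Finset.mem_filter, Finset.mem_univ, true_and,
    and_comm]

theorem lovasz_edgeCost (hr : r ∈ e) (c : ℝ) {x : V → ℝ}
    (hx : ∀ v ∈ e, x v ∈ Icc (0:ℝ) 1) :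
    lovasz (fun A => if r ∈ A ∧ ¬ e ⊆ A then c else 0) x = c * (x r - fmin e x) :=
  (congrArg (intervalIntegral · 0 1 volume) (edgeCost_superlevel_eq_indicator hr c x)).trans
    (intervalIntegral_indicator_Ioc_const c (le_fmin ⟨r, hr⟩ fun v hv => (hx v hv).1)
      (fmin_le hr) (hx r hr).2)

theorem intervalIntegrable_edgeCost (hr : r ∈ e) (c : ℝ) (x : V → ℝ) :
    IntervalIntegrable (fun θ : ℝ => if r ∈ Finset.univ.filter (fun v => θ ≤ x v) ∧
        ¬ e ⊆ Finset.univ.filter (fun v => θ ≤ x v) then c else 0) volume 0 1 := by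
  rw [edgeCost_superlevel_eq_indicator hr c x, intervalIntegrable_iff]
  exact (intervalIntegrable_iff.1 intervalIntegrable_const).indicator measurableSet_Ioc

end Edge

theorem hypergraph_mc_fractional_cost_general
    {V : Type*} [Fintype V] [DecidableEq V]
    (E : Finset (Finset V)) (w : Finset V → ℝ)
    (r : Finset V → V) (hr : ∀ e ∈ E, r e ∈ e)
    (k : ℕ) (x : V → Fin k → ℝ)
    (hx01 : ∀ v i, x v i ∈ Set.Icc (0:ℝ) 1) :
    ∑ i, lovasz (hypergraphSep E w r) (fun v => x v i)
      = ∑ e ∈ E, w e * (∑ i, (x (r e) i - fmin e (fun v => x v i))) := by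
  have hsep : hypergraphSep E w r
      = fun A => ∑ e ∈ E, if r e ∈ A ∧ ¬ e ⊆ A then w e else 0 := by
    funext A
    exact Finset.sum_filter _ _
  calc ∑ i, lovasz (hypergraphSep E w r) (fun v => x v i)
      = ∑ i, ∑ e ∈ E, w e * (x (r e) i - fmin e (fun v => x v i)) := by
        refine Finset.sum_congr rfl fun i _ => ?_
        rw [hsep, lovasz_finset_sum _ _ _ fun e he => intervalIntegrable_edgeCost (hr e he) _ _]
        exact Finset.sum_congr rfl fun e he => lovasz_edgeCost (hr e he) _ fun v _ => hx01 v i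
    _ = ∑ e ∈ E, w e * (∑ i, (x (r e) i - fmin e (fun v => x v i))) := by
        rw [Finset.sum_comm]
        simp only [Finset.mul_sum]

/-- **Fractional cost for the hypergraph separation cost function.**
Let `(V,E)` be a hypergraph with non-negative weights `w` and representatives
`r(e) ∈ e`, and let `f` be the hypergraph separation cost function. Let `x` be a
fractional allocation. With `d(e,i) = x(r(e),i) − min_{v∈e} x(v,i)` and
`d(e) = ∑_i d(e,i)`, we have `∑_{i=1}^k f̂(x_i) = ∑_{e∈E} w(e) d(e)`. -/
theorem hypergraph_mc_fractional_cost
    {V : Type*} [Fintype V] [DecidableEq V]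
    (E : Finset (Finset V)) (w : Finset V → ℝ) (hw : ∀ e, 0 ≤ w e)
    (r : Finset V → V) (hr : ∀ e ∈ E, r e ∈ e)
    (k : ℕ) (x : V → Fin k → ℝ)
    (hx01 : ∀ v i, x v i ∈ Set.Icc (0:ℝ) 1)
    (hxsum : ∀ v, ∑ i, x v i = 1) :
    ∑ i, lovasz (hypergraphSep E w r) (fun v => x v i)
      = ∑ e ∈ E, w e * (∑ i, (x (r e) i - fmin e (fun v => x v i))) :=
  hypergraph_mc_fractional_cost_general E w r hr k x hx01
end

section
/- Let e be a finite nonempty set of vertices with a designated representative u ∈ e, and let x : e × {1,…,k} → [0,1] satisfy Σ_{i=1}^k x(v,i) = 1 for every v ∈ e. Let d(e) = Σ_{i=1}^k (x(u,i) − min_{v ∈ e} x(v,i)). For z ∈ e let R(z) = {i : x(z,i) = max_{v ∈ e} x(v,i)}. Then Σ_{i ∈ R(z)} (max_{v ∈ e} x(v,i) − min_{v ∈ e} x(v,i)) ≤ d(e). -/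
open scoped BigOperators

/-- **Interval sizes lemma.**
Let `e` be a finite nonempty set with representative `u ∈ e` and let
`x : e × {1,…,k} → [0,1]` with `∑_i x(v,i) = 1` for all `v ∈ e`. Let
`d(e) = ∑_i (x(u,i) − min_{v∈e} x(v,i))`. For `z ∈ e` let
`R(z) = {i : x(z,i) = max_{v∈e} x(v,i)}`. Then
`∑_{i ∈ R(z)} (max_{v∈e} x(v,i) − min_{v∈e} x(v,i)) ≤ d(e)`. -/
theorem interval_sizes_bound
    {V : Type*} [DecidableEq V] (e : Finset V) (he : e.Nonempty)
    (u : V) (hu : u ∈ e)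
    (k : ℕ) (x : V → Fin k → ℝ)
    (hx01 : ∀ v ∈ e, ∀ i, x v i ∈ Set.Icc (0:ℝ) 1)
    (hxsum : ∀ v ∈ e, ∑ i, x v i = 1)
    (z : V) (hz : z ∈ e) :
    ∑ i ∈ Finset.univ.filter (fun i : Fin k => x z i = fmax e (fun v => x v i)),
        (fmax e (fun v => x v i) - fmin e (fun v => x v i))
      ≤ ∑ i, (x u i - fmin e (fun v => x v i)) := by
  have hmin : ∀ i, ∀ v ∈ e, fmin e (fun v => x v i) ≤ x v i := by
    intro i v hv
    simp only [fmin, dif_pos he]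
    exact Finset.inf'_le _ hv
  calc ∑ i ∈ Finset.univ.filter (fun i : Fin k => x z i = fmax e (fun v => x v i)),
        (fmax e (fun v => x v i) - fmin e (fun v => x v i))
      = ∑ i ∈ Finset.univ.filter (fun i : Fin k => x z i = fmax e (fun v => x v i)),
        (x z i - fmin e (fun v => x v i)) := by
        refine Finset.sum_congr rfl fun i hi => ?_
        rw [Finset.mem_filter] at hi
        rw [hi.2]
    _ ≤ ∑ i, (x z i - fmin e (fun v => x v i)) := by
        refine Finset.sum_le_sum_of_subset_of_nonneg (Finset.subset_univ _) fun i _ _ => ?_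
        have := hmin i z hz
        linarith
    _ = ∑ i, (x u i - fmin e (fun v => x v i)) := by
        rw [Finset.sum_sub_distrib, Finset.sum_sub_distrib, hxsum z hz, hxsum u hu]
end

section
/- Let e be a finite nonempty set of vertices with a designated representative u ∈ e, and let x : e × {1,…,k} → [0,1] satisfy Σ_{i=1}^k x(v,i) = 1 for every v ∈ e. Let d(e) = Σ_{i=1}^k (x(u,i) − min_{v ∈ e} x(v,i)). Then for every i ∈ {1,…,k}, max_{v ∈ e} x(v,i) − min_{v ∈ e} x(v,i) ≤ d(e). -/
open scoped BigOperators

/-- **Each interval has length at most `d(e)`.**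
Let `e` be a finite nonempty set with representative `u ∈ e` and let
`x : e × {1,…,k} → [0,1]` with `∑_i x(v,i) = 1` for all `v ∈ e`. Let
`d(e) = ∑_i (x(u,i) − min_{v∈e} x(v,i))`. Then for every `i`,
`max_{v∈e} x(v,i) − min_{v∈e} x(v,i) ≤ d(e)`. -/
theorem interval_length_le_d
    {V : Type*} [DecidableEq V] (e : Finset V) (he : e.Nonempty)
    (u : V) (hu : u ∈ e)
    (k : ℕ) (x : V → Fin k → ℝ)
    (hx01 : ∀ v ∈ e, ∀ i, x v i ∈ Set.Icc (0:ℝ) 1)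
    (hxsum : ∀ v ∈ e, ∑ i, x v i = 1) :
    ∀ i : Fin k,
      fmax e (fun v => x v i) - fmin e (fun v => x v i)
        ≤ ∑ j, (x u j - fmin e (fun v => x v j)) := by
  intro i
  have hmin : ∀ (j : Fin k) (v : V), v ∈ e → fmin e (fun v => x v j) ≤ x v j := by
    intro j v hv
    simp only [fmin, dif_pos he]
    exact Finset.inf'_le _ hv
  have hd : ∀ v ∈ e, ∑ j, (x v j - fmin e (fun w => x w j))
      = ∑ j, (x u j - fmin e (fun w => x w j)) := by
    intro v hv
    simp only [Finset.sum_sub_distrib, hxsum v hv, hxsum u hu]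
  rw [sub_le_iff_le_add]
  simp only [fmax, dif_pos he]
  apply Finset.sup'_le
  intro v hv
  have h1 : x v i - fmin e (fun w => x w i) ≤ ∑ j, (x v j - fmin e (fun w => x w j)) := by
    have := Finset.single_le_sum (f := fun j => x v j - fmin e (fun w => x w j))
      (fun j _ => sub_nonneg.2 (hmin j v hv)) (Finset.mem_univ i)
    simpa using this
  rw [hd v hv] at h1
  linarith
end

section
/- Let V be a finite set, let s_1, …, s_k ∈ V be distinct terminals, and let x be a fractional allocation on V with x(s_i,i) = 1 for each i. Let e ⊆ V be a nonempty hyperedge with designated representative r(e) ∈ e and let d(e) = Σ_{i=1}^k (x(r(e),i) − min_{v ∈ e} x(v,i)). Consider the CKR rounding: pick a permutation π of {1,…,k} uniformly at random and θ ∈ [0,1) uniformly at random, and set A_{π(i)} = {v : x(v,π(i)) ≥ θ} \ (A_{π(1)} ∪ ⋯ ∪ A_{π(i−1)}) for i = 1,…,k−1 and A_{π(k)} = V \ (A_{π(1)} ∪ ⋯ ∪ A_{π(k−1)}). Then the probability that e is not entirely contained in a single part A_j is at most H_{|e|} · d(e), where H_m = Σ_{j=1}^m 1/j. -/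
open scoped BigOperators

/-- In CKR rounding with permutation `π` and threshold `θ`, the position (in the
order given by `π`) of the part to which vertex `v` is assigned: the smallest
position `i` among the first `k−1` positions with `x(v, π(i)) ≥ θ`, and the last
position `k−1` if there is none (the leftover part `A_{π(k)}`). -/
noncomputable def ckrPos {V : Type*} (k : ℕ) (hk : 0 < k)
    (x : V → Fin k → ℝ) (π : Equiv.Perm (Fin k)) (θ : ℝ) (v : V) : Fin k :=
  if h : (Finset.univ.filter (fun i : Fin k => (i : ℕ) < k - 1 ∧ θ ≤ x v (π i))).Nonempty
  then (Finset.univ.filter (fun i : Fin k => (i : ℕ) < k - 1 ∧ θ ≤ x v (π i))).min' h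
  else ⟨k - 1, Nat.sub_lt hk one_pos⟩

/-!
If `e` is split, let `p` be the earliest position at which a vertex of `e` is captured and
`c = π p`: then `min_e x(·,c) < θ ≤ max_e x(·,c)`, and `c` precedes in `π` every label whose
maximum over `e` is at least that of `c`. For a fixed `π` the split probability is therefore
at most the sum of `max_e x(·,c) - min_e x(·,c)` over the labels `c` that come first, in `π`,
in their set `R c` of labels with at least the same maximum, and a uniform `π` puts `c` first
with probability `1 / |R c|`. Charge each label `c` to a vertex `w_c ∈ e` attaining its
maximum: the labels charged to `v` have total length at most `d(e)`, which can be computed at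
any vertex of `e` since `∑_i x(v,i) = 1`. Breaking ties makes the `|R c|` distinct, so the
smallest of them in the groups are distinct positive integers and the weights `1 / |R c|`
contribute at most `H_{|e|}`.
-/

open Finset Nat

theorem sum_one_div_le_harmonic (S : Finset ℕ) (hS : ∀ m ∈ S, 0 < m) :
    ∑ m ∈ S, (1 : ℝ) / m ≤ ∑ j ∈ range #S, (1 : ℝ) / (j + 1) := by
  induction S using Finset.induction_on_max with
  | empty => simp
  | insert a S ha ih =>
    have haS : a ∉ S := fun h => (ha a h).false
    have hcard : #S + 1 ≤ a := by
      have : insert a S ⊆ Icc 1 a := fun m hm =>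
        mem_Icc.2 ⟨hS m hm, (mem_insert.1 hm).elim le_of_eq fun h => (ha m h).le⟩
      simpa [card_insert_of_notMem haS] using card_le_card this
    rw [sum_insert haS, card_insert_of_notMem haS, sum_range_succ, add_comm]
    gcongr
    · exact ih fun m hm => hS m (mem_insert_of_mem hm)
    · exact_mod_cast hcard

theorem injective_card_filter_le {ι γ : Type*} [Fintype ι] [LinearOrder γ] {f : ι → γ}
    (hf : Function.Injective f) :
    Function.Injective fun c => #{j | f c ≤ f j} := by
  have key : ∀ c c', f c < f c' → #{j | f c' ≤ f j} < #{j | f c ≤ f j} := by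
    intro c c' h
    refine card_lt_card ⟨fun j hj => ?_, fun hsub => ?_⟩
    · simp only [mem_filter, mem_univ, true_and] at hj ⊢
      exact h.le.trans hj
    · have := hsub (by simp : c ∈ ({j | f c ≤ f j} : Finset ι))
      simp only [mem_filter, mem_univ, true_and] at this
      exact this.not_gt h
  intro c c' h
  rcases lt_trichotomy (f c) (f c') with hlt | heq | hgt
  · exact absurd h (key c c' hlt).ne'
  · exact hf heq
  · exact absurd h (key c' c hgt).ne

theorem sum_div_le_harmonic_mul {ι V : Type*} [Fintype ι] [DecidableEq V] {s : Finset V}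
    {g : ι → V} (hg : ∀ c, g c ∈ s) {a : ι → ℝ} (ha : ∀ c, 0 ≤ a c) {D : ℝ} (hD₀ : 0 ≤ D)
    (hD : ∀ v ∈ s, ∑ c ∈ {c | g c = v}, a c ≤ D) {r : ι → ℕ} (hr : Function.Injective r)
    (hr₀ : ∀ c, 0 < r c) :
    ∑ c, a c / r c ≤ (∑ j ∈ range #s, (1 : ℝ) / (j + 1)) * D := by
  set T := univ.image g
  have hTs : T ⊆ s := fun v hv => by obtain ⟨c, -, rfl⟩ := mem_image.1 hv; exact hg c
  set ρ : V → ℕ := fun v => sInf (r '' {c | g c = v})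
  have hρ_mem : ∀ v ∈ T, ∃ c, g c = v ∧ r c = ρ v := fun v hv => by
    obtain ⟨c, -, rfl⟩ := mem_image.1 hv
    exact Nat.sInf_mem ⟨_, Set.mem_image_of_mem r (rfl : g c = g c)⟩
  have hρ_le : ∀ c, ρ (g c) ≤ r c := fun c => Nat.sInf_le (Set.mem_image_of_mem r rfl)
  have hρ_inj : Set.InjOn ρ T := by
    intro v hv v' hv' h
    obtain ⟨c, rfl, hc⟩ := hρ_mem v hv
    obtain ⟨c', rfl, hc'⟩ := hρ_mem v' hv'
    rw [hr (hc.trans (h.trans hc'.symm))]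
  have hρ_pos : ∀ m ∈ T.image ρ, 0 < m := by
    intro m hm
    obtain ⟨v, hv, rfl⟩ := mem_image.1 hm
    obtain ⟨c, -, hc⟩ := hρ_mem v hv
    exact hc ▸ hr₀ c
  calc ∑ c, a c / r c
      = ∑ v ∈ T, ∑ c ∈ {c | g c = v}, a c / r c :=
        (sum_fiberwise_of_maps_to (fun c _ => mem_image_of_mem g (mem_univ c)) _).symm
    _ ≤ ∑ v ∈ T, ∑ c ∈ {c | g c = v}, a c / ρ v := by
        refine sum_le_sum fun v hv => sum_le_sum fun c hc => ?_
        obtain rfl := (mem_filter.1 hc).2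
        have := hρ_pos _ (mem_image_of_mem ρ hv)
        exact div_le_div_of_nonneg_left (ha c) (by exact_mod_cast this)
          (by exact_mod_cast hρ_le c)
    _ ≤ ∑ v ∈ T, D * (1 / ρ v) := by
        refine sum_le_sum fun v hv => ?_
        rw [← sum_div, mul_one_div]
        exact div_le_div_of_nonneg_right (hD v (hTs hv)) (Nat.cast_nonneg _)
    _ = D * ∑ m ∈ T.image ρ, (1 : ℝ) / m := by rw [← mul_sum, sum_image hρ_inj]
    _ ≤ D * ∑ j ∈ range #s, (1 : ℝ) / (j + 1) := by
        gcongr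
        refine (sum_one_div_le_harmonic _ hρ_pos).trans
          (sum_le_sum_of_subset_of_nonneg (range_subset_range.2 ?_) fun _ _ _ => by positivity)
        exact card_image_le.trans (card_le_card hTs)
    _ = _ := mul_comm _ _

section Permutations

variable {ι : Type*} [Fintype ι] [LinearOrder ι]

/-- As in `ckrPos`, `π i` is the element in position `i`. -/
def Equiv.Perm.PrecedesAll (π : Equiv.Perm ι) (c : ι) (R : Finset ι) : Prop :=
  ∀ j ∈ R, π.symm c ≤ π.symm j

instance (π : Equiv.Perm ι) (c : ι) (R : Finset ι) : Decidable (π.PrecedesAll c R) :=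
  inferInstanceAs (Decidable (∀ j ∈ R, π.symm c ≤ π.symm j))

theorem card_precedesAll_mul_card_le {c : ι} {R : Finset ι} (hc : c ∈ R) :
    #{π : Equiv.Perm ι | π.PrecedesAll c R} * #R ≤ (Fintype.card ι)! := by
  set B : ι → Finset (Equiv.Perm ι) := fun c' => {π | π.PrecedesAll c' R}
  have hB : ∀ c' ∈ R, #(B c) ≤ #(B c') := by
    intro c' hc'
    refine card_le_card_of_injOn (fun π => Equiv.swap c c' * π) (fun π hπ => ?_)
      (mul_right_injective _).injOn
    simp only [B, coe_filter, mem_univ, true_and, Set.mem_ofPred_eq] at hπ ⊢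
    intro j hj
    have hswap : Equiv.swap c c' j ∈ R := by
      rcases eq_or_ne j c with rfl | h1
      · simpa using hc'
      rcases eq_or_ne j c' with rfl | h2
      · simpa using hc
      · rwa [Equiv.swap_apply_of_ne_of_ne h1 h2]
    simpa [Equiv.Perm.mul_def, Equiv.symm_trans_apply] using hπ _ hswap
  have hdisj : (R : Set ι).PairwiseDisjoint B := by
    intro c₁ h₁ c₂ h₂ hne
    refine disjoint_left.2 fun π hπ₁ hπ₂ => hne ?_
    simp only [B, mem_filter_univ] at hπ₁ hπ₂
    exact π.symm.injective ((hπ₁ c₂ h₂).antisymm (hπ₂ c₁ h₁))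
  calc #(B c) * #R = ∑ _c' ∈ R, #(B c) := by rw [sum_const, smul_eq_mul, mul_comm]
    _ ≤ ∑ c' ∈ R, #(B c') := sum_le_sum hB
    _ = #(R.biUnion B) := (card_biUnion hdisj).symm
    _ ≤ Fintype.card (Equiv.Perm ι) := card_le_univ _
    _ = (Fintype.card ι)! := Fintype.card_perm

theorem sum_perm_sum_precedesAll_le (R : ι → Finset ι) (hR : ∀ c, c ∈ R c)
    (f : ι → ℝ) (hf : ∀ c, 0 ≤ f c) :
    ∑ π : Equiv.Perm ι, ∑ c ∈ {c | π.PrecedesAll c (R c)}, f c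
      ≤ (Fintype.card ι)! * ∑ c, f c / #(R c) := by
  rw [mul_sum]
  simp_rw [sum_filter]
  rw [sum_comm]
  refine sum_le_sum fun c _ => ?_
  rw [← sum_filter, sum_const, nsmul_eq_mul, ← mul_div_assoc,
    le_div_iff₀ (by exact_mod_cast card_pos.2 ⟨c, hR c⟩), mul_right_comm]
  gcongr
  · exact hf c
  · exact_mod_cast card_precedesAll_mul_card_le (hR c)

end Permutations

section Ckr

variable {V : Type*} {k : ℕ} {hk : 0 < k} {x : V → Fin k → ℝ} {π : Equiv.Perm (Fin k)} {θ : ℝ}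

theorem ckrPos_le_of_le_apply {v : V} {i : Fin k} (h : θ ≤ x v (π i)) :
    ckrPos k hk x π θ v ≤ i := by
  by_cases hi : (i : ℕ) < k - 1
  · have hmem : i ∈ univ.filter (fun i : Fin k => (i : ℕ) < k - 1 ∧ θ ≤ x v (π i)) := by
      simp [hi, h]
    rw [ckrPos, dif_pos ⟨i, hmem⟩]
    exact min'_le _ _ hmem
  · rw [Fin.le_def]
    have := (ckrPos k hk x π θ v).isLt
    omega

theorem le_apply_ckrPos {v : V} (h : (ckrPos k hk x π θ v : ℕ) < k - 1) :
    θ ≤ x v (π (ckrPos k hk x π θ v)) := by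
  unfold ckrPos at h ⊢
  split_ifs at h ⊢ with hne
  · exact (mem_filter.1 (min'_mem _ hne)).2.2
  · exact absurd h (lt_irrefl _)

theorem exists_label_of_ckrPos_split {e : Finset V} (he : e.Nonempty)
    (hsplit : ¬ ∃ j, ∀ v ∈ e, ckrPos k hk x π θ v = j) :
    ∃ c, (∃ w ∈ e, x w c < θ) ∧ (∃ u ∈ e, θ ≤ x u c) ∧
      ∀ j, ∀ u ∈ e, θ ≤ x u j → π.symm c ≤ π.symm j := by
  obtain ⟨u, hu, hmin⟩ := exists_min_image e (ckrPos k hk x π θ) he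
  push Not at hsplit
  obtain ⟨w, hw, hwu⟩ := hsplit (ckrPos k hk x π θ u)
  have hlt : ckrPos k hk x π θ u < ckrPos k hk x π θ w := (hmin w hw).lt_of_ne' hwu
  have hlast : (ckrPos k hk x π θ u : ℕ) < k - 1 := by
    have := (ckrPos k hk x π θ w).isLt
    rw [Fin.lt_def] at hlt
    omega
  refine ⟨π (ckrPos k hk x π θ u), ⟨w, hw, ?_⟩, ⟨u, hu, le_apply_ckrPos hlast⟩,
    fun j v hv hj => ?_⟩
  · by_contra! h
    exact (ckrPos_le_of_le_apply h).not_gt hlt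
  · rw [Equiv.symm_apply_apply]
    exact (hmin v hv).trans (ckrPos_le_of_le_apply (by rwa [Equiv.apply_symm_apply]))

theorem toReal_volume_ckr_split_le {e : Finset V} (he : e.Nonempty)
    (R : Fin k → Finset (Fin k))
    (hR : ∀ c, ∀ j ∈ R c, e.sup' he (x · c) ≤ e.sup' he (x · j)) :
    (MeasureTheory.volume {θ : ℝ | θ ∈ Set.Ico (0:ℝ) 1 ∧
        ¬ ∃ j : Fin k, ∀ v ∈ e, ckrPos k hk x π θ v = j}).toReal
      ≤ ∑ c ∈ {c | π.PrecedesAll c (R c)}, (e.sup' he (x · c) - e.inf' he (x · c)) := by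
  have hsub : {θ : ℝ | θ ∈ Set.Ico (0:ℝ) 1 ∧ ¬ ∃ j : Fin k, ∀ v ∈ e, ckrPos k hk x π θ v = j}
      ⊆ ⋃ c ∈ ({c | π.PrecedesAll c (R c)} : Finset (Fin k)),
          Set.Ioc (e.inf' he (x · c)) (e.sup' he (x · c)) := by
    rintro θ ⟨-, hsplit⟩
    obtain ⟨c, ⟨w, hw, hwc⟩, ⟨u, hu, huc⟩, hfirst⟩ := exists_label_of_ckrPos_split he hsplit
    have hc : θ ≤ e.sup' he (x · c) := huc.trans (le_sup' (x · c) hu)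
    refine Set.mem_biUnion (x := c) ?_ ⟨(inf'_le _ hw).trans_lt hwc, hc⟩
    refine mem_filter.2 ⟨mem_univ c, fun j hj => ?_⟩
    obtain ⟨u', hu', hu'j⟩ := (le_sup'_iff he).1 (hc.trans (hR c j hj))
    exact hfirst j u' hu' hu'j
  calc _ = MeasureTheory.volume.real _ := rfl
    _ ≤ _ := MeasureTheory.measureReal_mono hsub (MeasureTheory.measure_biUnion_lt_top
        (finite_toSet _) fun _ _ => measure_Ioc_lt_top).ne
    _ ≤ _ := MeasureTheory.measureReal_biUnion_finset_le _ _
    _ = _ := sum_congr rfl fun c _ => Real.volume_real_Ioc_of_le <| by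
        obtain ⟨v, hv⟩ := he
        exact (inf'_le _ hv).trans (le_sup' (x · c) hv)

end Ckr

theorem ckr_rounding_split_probability_general
    {V : Type*}
    (k : ℕ) (hk : 0 < k)
    (x : V → Fin k → ℝ)
    (hxsum : ∀ v, ∑ i, x v i = 1)
    (e : Finset V) (he : e.Nonempty) (re : V) (hre : re ∈ e) :
    (∑ π : Equiv.Perm (Fin k),
        (MeasureTheory.volume
          {θ : ℝ | θ ∈ Set.Ico (0:ℝ) 1 ∧
            ¬ ∃ j : Fin k, ∀ v ∈ e, ckrPos k hk x π θ v = j}).toReal)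
      / (Nat.factorial k : ℝ)
      ≤ (∑ j ∈ Finset.range e.card, (1 : ℝ) / (j + 1))
          * ∑ i, (x re i - fmin e (fun v => x v i)) := by
  classical
  set lo : Fin k → ℝ := fun c => e.inf' he (x · c)
  set hi : Fin k → ℝ := fun c => e.sup' he (x · c)
  set D := ∑ i, (x re i - fmin e (fun v => x v i))
  have hD : ∀ v ∈ e, ∑ i, (x v i - lo i) = D := fun v _ => by
    simp only [D, fmin, dif_pos he, sum_sub_distrib, hxsum, lo]
  have hD₀ : 0 ≤ D := hD re hre ▸ sum_nonneg fun i _ => sub_nonneg.2 (inf'_le _ hre)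
  have hlohi : ∀ c, lo c ≤ hi c := fun c => (inf'_le _ hre).trans (le_sup' (x · c) hre)
  -- breaking ties by the index makes `#(R c)` injective in `c`
  set R : Fin k → Finset (Fin k) := fun c => {j | toLex (hi c, c) ≤ toLex (hi j, j)}
  have hR : ∀ c, ∀ j ∈ R c, hi c ≤ hi j := fun c j hj =>
    (Prod.Lex.le_iff.1 (mem_filter.1 hj).2).elim le_of_lt fun h => h.1.le
  choose w hw hwx using fun c => exists_mem_eq_sup' he (x · c)
  have hfibre : ∀ v ∈ e, ∑ c ∈ {c | w c = v}, (hi c - lo c) ≤ D := fun v hv => by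
    rw [← hD v hv]
    refine (sum_congr rfl fun c hc => ?_).trans_le (sum_le_sum_of_subset_of_nonneg
      (subset_univ _) fun c _ _ => sub_nonneg.2 (inf'_le _ hv))
    rw [← (mem_filter.1 hc).2, ← hwx]
  rw [div_le_iff₀ (by positivity)]
  calc _ ≤ ∑ π : Equiv.Perm (Fin k), ∑ c ∈ {c | π.PrecedesAll c (R c)}, (hi c - lo c) :=
        sum_le_sum fun π _ => toReal_volume_ckr_split_le he R hR
    _ ≤ k ! * ∑ c, (hi c - lo c) / #(R c) := by
        simpa using sum_perm_sum_precedesAll_le R (fun c => by simp [R])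
          (fun c => hi c - lo c) fun c => sub_nonneg.2 (hlohi c)
    _ ≤ k ! * ((∑ j ∈ range #e, (1 : ℝ) / (j + 1)) * D) := by
        gcongr
        exact sum_div_le_harmonic_mul hw (fun c => sub_nonneg.2 (hlohi c)) hD₀
          hfibre (injective_card_filter_le (f := fun c => toLex (hi c, c))
            fun c c' h => (Prod.ext_iff.1 (toLex.injective h)).2)
          fun c => card_pos.2 ⟨c, by simp [R]⟩
    _ = _ := mul_comm _ _

/-- **CKR rounding splits a hyperedge with probability at most `H_{|e|} · d(e)`.**
Let `x` be a fractional allocation on `V` with distinct terminals `s_i` and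
`x(s_i,i) = 1`, and let `e ⊆ V` be a nonempty hyperedge with representative
`r(e) ∈ e` and `d(e) = ∑_i (x(r(e),i) − min_{v∈e} x(v,i))`. In CKR rounding
(uniformly random permutation `π` of the labels and uniformly random `θ ∈ [0,1)`),
the probability that `e` is not entirely contained in a single part is at most
`H_{|e|} · d(e)`, where `H_m = ∑_{j=1}^m 1/j`. -/
theorem ckr_rounding_split_probability
    {V : Type*} [Fintype V] [DecidableEq V]
    (k : ℕ) (hk : 0 < k) (s : Fin k → V) (hs : Function.Injective s)
    (x : V → Fin k → ℝ)
    (hx01 : ∀ v i, x v i ∈ Set.Icc (0:ℝ) 1)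
    (hxsum : ∀ v, ∑ i, x v i = 1)
    (hterm : ∀ i, x (s i) i = 1)
    (e : Finset V) (he : e.Nonempty) (re : V) (hre : re ∈ e) :
    (∑ π : Equiv.Perm (Fin k),
        (MeasureTheory.volume
          {θ : ℝ | θ ∈ Set.Ico (0:ℝ) 1 ∧
            ¬ ∃ j : Fin k, ∀ v ∈ e, ckrPos k hk x π θ v = j}).toReal)
      / (Nat.factorial k : ℝ)
      ≤ (∑ j ∈ Finset.range e.card, (1 : ℝ) / (j + 1))
          * ∑ i, (x re i - fmin e (fun v => x v i)) :=
  ckr_rounding_split_probability_general k hk x hxsum e he re hre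
end

section
/- Let (V, E) be a hypergraph with non-negative hyperedge weights w, where each hyperedge e has a fixed representative r(e) ∈ e, and let f(A) = Σ_{e : r(e) ∈ A, e ⊄ A} w(e). Let s_1, …, s_k ∈ V be distinct terminals and let x be a fractional allocation on V with x(s_i,i) = 1 for each i. Then there exists a partition (A_1, …, A_k) of V with s_i ∈ A_i for each i such that the total weight of hyperedges not entirely contained in a single part is at most 2(1 − 1/k) · Σ_{i=1}^k f̂(x_i). In particular, the integrality gap of the Lovász-extension relaxation for hypergraph multiway cut is at most 2(1 − 1/k). -/
open scoped BigOperators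

/-! Fix a label `ℓ` and a threshold `θ ∈ (1/2, 1]`. Give every label `j ≠ ℓ` the vertices with
`θ ≤ x(v, j)` and label `ℓ` all the others; as `θ > 1/2` this is a partition, and it separates
the terminals. A hyperedge `e` is cut exactly when `b_ℓ(e) < θ ≤ a_ℓ(e)`, where
`b_ℓ(e) = max_{j ≠ ℓ} min_{v ∈ e} x(v, j)` and `a_ℓ(e) = max_{j ≠ ℓ} max_{v ∈ e} x(v, j)`, while its
contribution to `∑ᵢ f̂(xᵢ)` is `w(e) (1 - ∑ⱼ min_{v ∈ e} x(v, j))`. An elementary inequality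
between these numbers shows that the cost of the partition, integrated over `θ ∈ (1/2, 1]` and
summed over `ℓ`, is at most `(k - 1) ∑ᵢ f̂(xᵢ)`; so some `ℓ` and `θ` give cost at most
`2 (1 - 1/k) ∑ᵢ f̂(xᵢ)`. With at most one label, one part holding everything costs nothing. -/

open Finset MeasureTheory

section StdSimplex

variable {ι : Type*} [Fintype ι] {y : ι → ℝ}

theorem add_le_one_of_mem_stdSimplex (hy : y ∈ stdSimplex ℝ ι) {i j : ι} (hij : i ≠ j) :
    y i + y j ≤ 1 := by
  classical
  rw [← sum_pair hij, ← hy.2]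
  exact sum_le_sum_of_subset_of_nonneg (subset_univ _) fun k _ _ => hy.1 k

theorem eq_zero_of_mem_stdSimplex_of_eq_one (hy : y ∈ stdSimplex ℝ ι) {i j : ι} (hi : y i = 1)
    (hji : j ≠ i) : y j = 0 :=
  le_antisymm (by linarith [add_le_one_of_mem_stdSimplex hy hji]) (hy.1 j)

theorem sub_le_one_sub_sum_of_mem_stdSimplex (hy : y ∈ stdSimplex ℝ ι) {β : ι → ℝ} (hβ : β ≤ y)
    (i : ι) : y i - β i ≤ 1 - ∑ j, β j :=
  calc y i - β i ≤ ∑ j, (y j - β j) := single_le_sum (fun j _ => sub_nonneg.2 (hβ j)) (mem_univ i)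
    _ = 1 - ∑ j, β j := by rw [sum_sub_distrib, hy.2]

end StdSimplex

section MaxExcept

variable {ι α : Type*} [Fintype ι] [DecidableEq ι] [Nontrivial ι] [LinearOrder α]

def maxExcept (β : ι → α) (ℓ : ι) : α :=
  (univ.erase ℓ).sup' ((erase_nonempty (mem_univ ℓ)).2 univ_nontrivial) β

variable {β : ι → α} {ℓ : ι} {c : α}

theorem le_maxExcept {j : ι} (hj : j ≠ ℓ) : β j ≤ maxExcept β ℓ :=
  le_sup' β (mem_erase.2 ⟨hj, mem_univ j⟩)

theorem maxExcept_le_iff : maxExcept β ℓ ≤ c ↔ ∀ j, j ≠ ℓ → β j ≤ c := by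
  simp [maxExcept, sup'_le_iff]

theorem maxExcept_lt_iff : maxExcept β ℓ < c ↔ ∀ j, j ≠ ℓ → β j < c := by
  simp [maxExcept, sup'_lt_iff]

theorem le_maxExcept_iff : c ≤ maxExcept β ℓ ↔ ∃ j, j ≠ ℓ ∧ c ≤ β j := by
  simp [maxExcept, le_sup'_iff]

theorem exists_maxExcept_eq (β : ι → α) (ℓ : ι) : ∃ j, j ≠ ℓ ∧ maxExcept β ℓ = β j := by
  obtain ⟨j, hj, h⟩ := exists_mem_eq_sup' ((erase_nonempty (mem_univ ℓ)).2 univ_nontrivial) β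
  exact ⟨j, (mem_erase.1 hj).1, h⟩

end MaxExcept

theorem max_zero_min_add_mul_le {m D u : ℝ} (hm : 1 ≤ m) (hD : 0 ≤ D) :
    max 0 (min u D) + m * max 0 (min (D - u) D) ≤ m * D := by
  rcases le_total u 0 with hu | hu
  · rw [max_eq_left (min_le_of_left_le hu), min_eq_right (by linarith), max_eq_right hD]
    linarith
  rcases le_total u D with huD | huD
  · rw [min_eq_left huD, max_eq_right hu, min_eq_left (by linarith), max_eq_right (by linarith)]
    nlinarith
  · rw [min_eq_right huD, max_eq_right hD, min_eq_left (by linarith), max_eq_left (by linarith)]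
    nlinarith

theorem sum_max_sub_max_maxExcept_le {ι : Type*} [Fintype ι] [DecidableEq ι] [Nontrivial ι]
    (β a : ι → ℝ) (hβ : ∀ j, 0 ≤ β j) (hsum : ∑ j, β j ≤ 1)
    (ha : ∀ ℓ, a ℓ ≤ 1 - ∑ j, β j + maxExcept β ℓ) :
    ∑ ℓ, max 0 (a ℓ - max (maxExcept β ℓ) 2⁻¹) ≤ (Fintype.card ι - 1) * (1 - ∑ j, β j) := by
  set D := 1 - ∑ j, β j
  -- For a maximiser `p` of `β`, the term at `p` is at most `(1/2 - β p)⁺` because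
  -- `maxExcept β p + β p ≤ 1 - D`, and every other term is at most `(β p + D - 1/2)⁺`.
  obtain ⟨p, hp⟩ := Finite.exists_max β
  obtain ⟨q, hqp, hq⟩ := exists_maxExcept_eq β p
  have hpq : β p + β q ≤ 1 - D := by
    rw [sub_sub_cancel, ← sum_pair hqp.symm]
    exact sum_le_sum_of_subset_of_nonneg (subset_univ _) fun j _ _ => hβ j
  have hterm : ∀ ℓ, max 0 (a ℓ - max (maxExcept β ℓ) 2⁻¹)
      ≤ max 0 (min (maxExcept β ℓ + D - 2⁻¹) D) := by
    intro ℓ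
    refine max_le_max le_rfl (le_min ?_ ?_) <;>
      linarith [ha ℓ, le_max_left (maxExcept β ℓ) 2⁻¹, le_max_right (maxExcept β ℓ) 2⁻¹]
  have htp : max 0 (a p - max (maxExcept β p) 2⁻¹) ≤ max 0 (min (2⁻¹ - β p) D) :=
    (hterm p).trans (max_le_max le_rfl (min_le_min_right D (by linarith)))
  have hto : ∀ ℓ ∈ univ.erase p,
      max 0 (a ℓ - max (maxExcept β ℓ) 2⁻¹) ≤ max 0 (min (D - (2⁻¹ - β p)) D) :=
    fun ℓ _ => (hterm ℓ).trans (max_le_max le_rfl (min_le_min_right D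
      (by linarith [(maxExcept_le_iff (β := β) (ℓ := ℓ)).2 fun j _ => hp j])))
  have hcard : ((univ.erase p).card : ℝ) = Fintype.card ι - 1 := by
    rw [card_erase_of_mem (mem_univ p), card_univ, Nat.cast_pred Fintype.card_pos]
  have hm : (1 : ℝ) ≤ Fintype.card ι - 1 := by
    have := Fintype.one_lt_card (α := ι)
    rw [le_sub_iff_add_le]; exact_mod_cast this
  calc ∑ ℓ, max 0 (a ℓ - max (maxExcept β ℓ) 2⁻¹)
      = max 0 (a p - max (maxExcept β p) 2⁻¹)
        + ∑ ℓ ∈ univ.erase p, max 0 (a ℓ - max (maxExcept β ℓ) 2⁻¹) :=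
        (add_sum_erase _ _ (mem_univ p)).symm
    _ ≤ max 0 (min (2⁻¹ - β p) D) + (Fintype.card ι - 1) * max 0 (min (D - (2⁻¹ - β p)) D) := by
        rw [← hcard, ← nsmul_eq_mul]
        exact add_le_add htp (sum_le_card_nsmul _ _ _ hto)
    _ ≤ (Fintype.card ι - 1) * D := max_zero_min_add_mul_le hm (sub_nonneg.2 hsum)

theorem intervalIntegrable_indicator_Ioc_const (p q c u v : ℝ) :
    IntervalIntegrable ((Set.Ioc p q).indicator fun _ => c) volume u v :=
  (integrable_indicator_iff measurableSet_Ioc).2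
    (integrableOn_const measure_Ioc_lt_top.ne) |>.intervalIntegrable

theorem intervalIntegral_indicator_Ioc_const_s16 (p q c : ℝ) {u v : ℝ} (huv : u ≤ v) :
    ∫ θ in u..v, (Set.Ioc p q).indicator (fun _ => c) θ = max 0 (min q v - max p u) * c := by
  rw [intervalIntegral.integral_of_le huv, setIntegral_indicator measurableSet_Ioc,
    Set.Ioc_inter_Ioc, setIntegral_const, Real.volume_real_Ioc, smul_eq_mul, max_comm p u,
    min_comm q v, max_comm]

theorem exists_mem_Ioc_mul_le_intervalIntegral {g : ℝ → ℝ} {a b : ℝ} (hab : a < b)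
    (hg : IntervalIntegrable g volume a b) :
    ∃ θ ∈ Set.Ioc a b, (b - a) * g θ ≤ ∫ θ in a..b, g θ := by
  have hμ : volume (Set.Ioc a b) ≠ 0 := by simp [hab]
  obtain ⟨θ, hθ, hle⟩ := exists_le_setAverage hμ measure_Ioc_lt_top.ne hg.1
  rw [setAverage_eq, Real.volume_real_Ioc_of_le hab.le, smul_eq_mul,
    le_inv_mul_iff₀ (sub_pos.2 hab), ← intervalIntegral.integral_of_le hab.le] at hle
  exact ⟨θ, hθ, hle⟩

section Superlevel

variable {V : Type*} [Fintype V]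

theorem setOf_mem_superlevel_and_not_subset (y : V → ℝ) {e : Finset V} (he : e.Nonempty) (r : V) :
    {θ | r ∈ univ.filter (fun v => θ ≤ y v) ∧ ¬e ⊆ univ.filter fun v => θ ≤ y v} =
      Set.Ioc (e.inf' he y) (y r) := by
  ext θ
  simp only [Set.mem_ofPred_eq, mem_filter, mem_univ, true_and, subset_iff, ← le_inf'_iff he,
    not_le, Set.mem_Ioc, and_comm]

theorem intervalIntegrable_indicator_sep (y : V → ℝ) {e : Finset V} (he : e.Nonempty) (r : V)
    (c u v : ℝ) :
    IntervalIntegrable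
      ({θ | r ∈ univ.filter (fun v => θ ≤ y v) ∧ ¬e ⊆ univ.filter fun v => θ ≤ y v}.indicator
        fun _ => c) volume u v := by
  rw [setOf_mem_superlevel_and_not_subset y he]
  exact intervalIntegrable_indicator_Ioc_const _ _ _ _ _

end Superlevel

section Rounding

variable {ι V : Type*} [Fintype ι] [DecidableEq ι] [Fintype V]

noncomputable def thresholdRounding (x : V → ι → ℝ) (θ : ℝ) (ℓ j : ι) : Finset V :=
  if j = ℓ then univ.filter fun v => ∀ i, i ≠ ℓ → x v i < θ else univ.filter fun v => θ ≤ x v j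

variable {x : V → ι → ℝ} {θ : ℝ} {ℓ : ι} {v : V}

@[simp]
theorem mem_thresholdRounding_self : v ∈ thresholdRounding x θ ℓ ℓ ↔ ∀ i, i ≠ ℓ → x v i < θ := by
  simp [thresholdRounding]

@[simp]
theorem mem_thresholdRounding_of_ne {j : ι} (hj : j ≠ ℓ) :
    v ∈ thresholdRounding x θ ℓ j ↔ θ ≤ x v j := by
  simp [thresholdRounding, hj]

theorem disjoint_thresholdRounding (hx : ∀ v, x v ∈ stdSimplex ℝ ι) (hθ : 2⁻¹ < θ)
    {i j : ι} (hij : i ≠ j) : Disjoint (thresholdRounding x θ ℓ i) (thresholdRounding x θ ℓ j) := by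
  rw [disjoint_left]
  intro v hi hj
  rcases eq_or_ne i ℓ with rfl | hiℓ
  · exact (mem_thresholdRounding_of_ne hij.symm).1 hj |>.not_gt
      (mem_thresholdRounding_self.1 hi j hij.symm)
  rcases eq_or_ne j ℓ with rfl | hjℓ
  · exact (mem_thresholdRounding_of_ne hij).1 hi |>.not_gt (mem_thresholdRounding_self.1 hj i hij)
  linarith [add_le_one_of_mem_stdSimplex (hx v) hij, (mem_thresholdRounding_of_ne hiℓ).1 hi,
    (mem_thresholdRounding_of_ne hjℓ).1 hj]

theorem biUnion_thresholdRounding [DecidableEq V] :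
    univ.biUnion (thresholdRounding x θ ℓ) = univ := by
  refine eq_univ_of_forall fun v => mem_biUnion.2 ?_
  by_cases h : ∃ j, j ≠ ℓ ∧ θ ≤ x v j
  · obtain ⟨j, hj, hθ⟩ := h
    exact ⟨j, mem_univ j, (mem_thresholdRounding_of_ne hj).2 hθ⟩
  · simp only [not_exists, not_and, not_le] at h
    exact ⟨ℓ, mem_univ ℓ, mem_thresholdRounding_self.2 h⟩

theorem mem_thresholdRounding_of_eq_one (hx : ∀ v, x v ∈ stdSimplex ℝ ι)
    (hθ : θ ∈ Set.Ioc 0 1) {i : ι} (hi : x v i = 1) : v ∈ thresholdRounding x θ ℓ i := by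
  rcases eq_or_ne i ℓ with rfl | hiℓ
  · exact mem_thresholdRounding_self.2 fun j hj =>
      (eq_zero_of_mem_stdSimplex_of_eq_one (hx v) hi hj).trans_lt hθ.1
  · exact (mem_thresholdRounding_of_ne hiℓ).2 (hi ▸ hθ.2)

variable {e : Finset V}

theorem subset_thresholdRounding_of_ne_iff (he : e.Nonempty) {j : ι} (hj : j ≠ ℓ) :
    e ⊆ thresholdRounding x θ ℓ j ↔ θ ≤ e.inf' he fun v => x v j := by
  simp only [le_inf'_iff, subset_iff, mem_thresholdRounding_of_ne hj]

variable [Nontrivial ι]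

theorem subset_thresholdRounding_self_iff (he : e.Nonempty) :
    e ⊆ thresholdRounding x θ ℓ ℓ ↔ maxExcept (fun j => e.sup' he fun v => x v j) ℓ < θ := by
  simp only [maxExcept_lt_iff, sup'_lt_iff, subset_iff, mem_thresholdRounding_self]
  exact ⟨fun h j hj v hv => h hv j hj, fun h v hv j hj => h j hj v hv⟩

theorem exists_subset_thresholdRounding_iff (he : e.Nonempty) :
    (∃ j, e ⊆ thresholdRounding x θ ℓ j) ↔
      θ ≤ maxExcept (fun j => e.inf' he fun v => x v j) ℓ ∨
        maxExcept (fun j => e.sup' he fun v => x v j) ℓ < θ := by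
  constructor
  · rintro ⟨j, hj⟩
    rcases eq_or_ne j ℓ with rfl | hjℓ
    · exact Or.inr ((subset_thresholdRounding_self_iff he).1 hj)
    · exact Or.inl (le_maxExcept_iff.2 ⟨j, hjℓ, (subset_thresholdRounding_of_ne_iff he hjℓ).1 hj⟩)
  · rintro (h | h)
    · obtain ⟨j, hjℓ, hj⟩ := le_maxExcept_iff.1 h
      exact ⟨j, (subset_thresholdRounding_of_ne_iff he hjℓ).2 hj⟩
    · exact ⟨ℓ, (subset_thresholdRounding_self_iff he).2 h⟩

theorem setOf_not_exists_subset_thresholdRounding (he : e.Nonempty) (ℓ : ι) :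
    {θ | ¬∃ j, e ⊆ thresholdRounding x θ ℓ j} =
      Set.Ioc (maxExcept (fun j => e.inf' he fun v => x v j) ℓ)
        (maxExcept (fun j => e.sup' he fun v => x v j) ℓ) := by
  ext θ
  simp only [Set.mem_ofPred_eq, exists_subset_thresholdRounding_iff he, not_or, not_le, not_lt,
    Set.mem_Ioc]

theorem intervalIntegrable_indicator_cut {e : Finset V} (he : e.Nonempty) (ℓ : ι) (c u v : ℝ) :
    IntervalIntegrable
      ({θ | ¬∃ j, e ⊆ thresholdRounding x θ ℓ j}.indicator fun _ => c) volume u v := by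
  rw [setOf_not_exists_subset_thresholdRounding he]
  exact intervalIntegrable_indicator_Ioc_const _ _ _ _ _

theorem sum_intervalIntegral_cut_le (hx : ∀ v, x v ∈ stdSimplex ℝ ι) {e : Finset V}
    (he : e.Nonempty) {r : V} (hr : r ∈ e) {c : ℝ} (hc : 0 ≤ c) :
    ∑ ℓ, ∫ θ in (2⁻¹ : ℝ)..1, {θ | ¬∃ j, e ⊆ thresholdRounding x θ ℓ j}.indicator (fun _ => c) θ ≤
      (Fintype.card ι - 1) * ∑ i, ∫ θ in (0 : ℝ)..1,
        {θ | r ∈ univ.filter (fun v => θ ≤ x v i) ∧ ¬e ⊆ univ.filter fun v => θ ≤ x v i}.indicator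
          (fun _ => c) θ := by
  set β : ι → ℝ := fun j => e.inf' he fun v => x v j
  set α : ι → ℝ := fun j => e.sup' he fun v => x v j
  have hβx : ∀ v ∈ e, β ≤ x v := fun v hv j => inf'_le _ hv
  have hβ0 : ∀ j, 0 ≤ β j := fun j => le_inf' he _ fun v _ => (hx v).1 j
  have hβ1 : ∑ j, β j ≤ 1 := by
    obtain ⟨v, hv⟩ := he
    exact (hx v).2 ▸ sum_le_sum fun j _ => hβx v hv j
  have hα : ∀ ℓ, maxExcept α ℓ ≤ 1 - ∑ j, β j + maxExcept β ℓ := fun ℓ =>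
    maxExcept_le_iff.2 fun j hj => sup'_le he _ fun v hv => by
      linarith [sub_le_one_sub_sum_of_mem_stdSimplex (hx v) (hβx v hv) j, le_maxExcept (β := β) hj]
  have hα1 : ∀ ℓ, maxExcept α ℓ ≤ 1 := fun ℓ =>
    maxExcept_le_iff.2 fun j _ => sup'_le he _ fun v _ => (mem_Icc_of_mem_stdSimplex (hx v) j).2
  have hsep : ∀ i, ∫ θ in (0 : ℝ)..1,
      {θ | r ∈ univ.filter (fun v => θ ≤ x v i) ∧ ¬e ⊆ univ.filter fun v => θ ≤ x v i}.indicator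
        (fun _ => c) θ = (x r i - β i) * c := fun i => by
    rw [setOf_mem_superlevel_and_not_subset _ he,
      intervalIntegral_indicator_Ioc_const_s16 _ _ _ zero_le_one,
      min_eq_left (mem_Icc_of_mem_stdSimplex (hx r) i).2, max_eq_left (hβ0 i),
      max_eq_right (sub_nonneg.2 (hβx r hr i))]
  calc ∑ ℓ, ∫ θ in (2⁻¹ : ℝ)..1, {θ | ¬∃ j, e ⊆ thresholdRounding x θ ℓ j}.indicator (fun _ => c) θ
      = (∑ ℓ, max 0 (maxExcept α ℓ - max (maxExcept β ℓ) 2⁻¹)) * c := by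
        rw [sum_mul]
        refine sum_congr rfl fun ℓ _ => ?_
        rw [setOf_not_exists_subset_thresholdRounding he,
          intervalIntegral_indicator_Ioc_const_s16 _ _ _ (by norm_num), min_eq_left (hα1 ℓ)]
    _ ≤ (Fintype.card ι - 1) * (1 - ∑ j, β j) * c :=
        mul_le_mul_of_nonneg_right (sum_max_sub_max_maxExcept_le β (maxExcept α) hβ0 hβ1 hα) hc
    _ = _ := by
        rw [mul_assoc]
        simp only [hsep, ← sum_mul, sum_sub_distrib, (hx r).2]

end Rounding

theorem lovasz_nonneg {V : Type*} [Fintype V] {f : Finset V → ℝ} (hf : ∀ A, 0 ≤ f A) (y : V → ℝ) :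
    0 ≤ lovasz f y :=
  intervalIntegral.integral_nonneg zero_le_one fun _ _ => hf _

theorem hypergraphSep_nonneg {V : Type*} [DecidableEq V] (E : Finset (Finset V))
    {w : Finset V → ℝ} (hw : ∀ e, 0 ≤ w e) (r : Finset V → V) (A : Finset V) :
    0 ≤ hypergraphSep E w r A :=
  sum_nonneg fun e _ => hw e

theorem hypergraphSep_superlevel_eq_sum {V : Type*} [Fintype V] [DecidableEq V]
    (E : Finset (Finset V)) (w : Finset V → ℝ) (r : Finset V → V) (y : V → ℝ) (θ : ℝ) :
    hypergraphSep E w r (univ.filter fun v => θ ≤ y v) =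
      ∑ e ∈ E,
        {θ | r e ∈ univ.filter (fun v => θ ≤ y v) ∧ ¬e ⊆ univ.filter fun v => θ ≤ y v}.indicator
          (fun _ => w e) θ := by
  rw [hypergraphSep, sum_indicator_eq_sum_filter]
  rfl

section Hypergraph

variable {ι V : Type*} [Fintype ι] [DecidableEq ι] [Fintype V] [DecidableEq V]

def cutWeight (E : Finset (Finset V)) (w : Finset V → ℝ) (A : ι → Finset V) : ℝ :=
  ∑ e ∈ E.filter (fun e => ¬∃ j, e ⊆ A j), w e

variable {x : V → ι → ℝ}

theorem cutWeight_thresholdRounding_eq_sum (E : Finset (Finset V)) (w : Finset V → ℝ) (θ : ℝ)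
    (ℓ : ι) :
    cutWeight E w (thresholdRounding x θ ℓ) =
      ∑ e ∈ E, {θ | ¬∃ j, e ⊆ thresholdRounding x θ ℓ j}.indicator (fun _ => w e) θ := by
  rw [cutWeight, sum_indicator_eq_sum_filter]
  rfl

variable [Nontrivial ι]

theorem sum_intervalIntegral_cutWeight_le {E : Finset (Finset V)} (hE : ∀ e ∈ E, e.Nonempty)
    {w : Finset V → ℝ} (hw : ∀ e, 0 ≤ w e) {r : Finset V → V} (hr : ∀ e ∈ E, r e ∈ e)
    (hx : ∀ v, x v ∈ stdSimplex ℝ ι) :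
    ∑ ℓ, ∫ θ in (2⁻¹ : ℝ)..1, cutWeight E w (thresholdRounding x θ ℓ) ≤
      (Fintype.card ι - 1) * ∑ i, lovasz (hypergraphSep E w r) fun v => x v i := by
  calc ∑ ℓ, ∫ θ in (2⁻¹ : ℝ)..1, cutWeight E w (thresholdRounding x θ ℓ)
      = ∑ e ∈ E, ∑ ℓ, ∫ θ in (2⁻¹ : ℝ)..1,
          {θ | ¬∃ j, e ⊆ thresholdRounding x θ ℓ j}.indicator (fun _ => w e) θ := by
        simp only [cutWeight_thresholdRounding_eq_sum]
        rw [sum_comm]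
        exact sum_congr rfl fun ℓ _ => intervalIntegral.integral_finsetSum fun e he =>
          intervalIntegrable_indicator_cut (hE e he) ℓ _ _ _
    _ ≤ ∑ e ∈ E, (Fintype.card ι - 1) * ∑ i, ∫ θ in (0 : ℝ)..1,
          Set.indicator
            {θ | r e ∈ univ.filter (fun v => θ ≤ x v i) ∧ ¬e ⊆ univ.filter fun v => θ ≤ x v i}
            (fun _ => w e) θ :=
        sum_le_sum fun e he => sum_intervalIntegral_cut_le hx (hE e he) (hr e he) (hw e)
    _ = (Fintype.card ι - 1) * ∑ i, lovasz (hypergraphSep E w r) fun v => x v i := by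
        simp only [lovasz, hypergraphSep_superlevel_eq_sum]
        rw [← mul_sum, sum_comm]
        congr 1
        exact sum_congr rfl fun i _ => (intervalIntegral.integral_finsetSum fun e he =>
          intervalIntegrable_indicator_sep _ (hE e he) _ _ _ _).symm

theorem exists_cutWeight_thresholdRounding_le {E : Finset (Finset V)} (hE : ∀ e ∈ E, e.Nonempty)
    {w : Finset V → ℝ} (hw : ∀ e, 0 ≤ w e) {r : Finset V → V} (hr : ∀ e ∈ E, r e ∈ e)
    (hx : ∀ v, x v ∈ stdSimplex ℝ ι) :
    ∃ ℓ, ∃ θ ∈ Set.Ioc (2⁻¹ : ℝ) 1, cutWeight E w (thresholdRounding x θ ℓ) ≤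
      2 * (1 - 1 / (Fintype.card ι : ℝ)) * ∑ i, lovasz (hypergraphSep E w r) fun v => x v i := by
  set L := ∑ i, lovasz (hypergraphSep E w r) fun v => x v i
  have hcard : (Fintype.card ι : ℝ) ≠ 0 := Nat.cast_ne_zero.2 Fintype.card_ne_zero
  obtain ⟨ℓ, -, hℓ⟩ := exists_le_of_sum_le
    (f := fun ℓ => ∫ θ in (2⁻¹ : ℝ)..1, cutWeight E w (thresholdRounding x θ ℓ))
    (g := fun _ => (1 - 1 / (Fintype.card ι : ℝ)) * L)
    univ_nonempty <| by
      rw [sum_const, card_univ, nsmul_eq_mul, ← mul_assoc, mul_one_sub, mul_one_div_cancel hcard]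
      exact sum_intervalIntegral_cutWeight_le hE hw hr hx
  have hint :
      IntervalIntegrable (fun θ => cutWeight E w (thresholdRounding x θ ℓ)) volume 2⁻¹ 1 := by
    simp only [cutWeight_thresholdRounding_eq_sum]
    have := IntervalIntegrable.sum E fun e he =>
      intervalIntegrable_indicator_cut (x := x) (hE e he) ℓ (w e) 2⁻¹ 1
    rwa [sum_fn] at this
  obtain ⟨θ, hθ, hle⟩ := exists_mem_Ioc_mul_le_intervalIntegral (by norm_num) hint
  exact ⟨ℓ, θ, hθ, by linarith⟩

end Hypergraph

theorem nonempty_of_mem_stdSimplex {ι : Type*} [Fintype ι] {y : ι → ℝ} (hy : y ∈ stdSimplex ℝ ι) :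
    Nonempty ι := by
  by_contra h
  rw [not_nonempty_iff] at h
  simp [stdSimplex_of_isEmpty_index] at hy

theorem exists_partition_cutWeight_le {ι V : Type*} [Fintype ι] [DecidableEq ι] [Fintype V]
    [DecidableEq V] {E : Finset (Finset V)} (hE : ∀ e ∈ E, e.Nonempty) {w : Finset V → ℝ}
    (hw : ∀ e, 0 ≤ w e) {r : Finset V → V} (hr : ∀ e ∈ E, r e ∈ e) (s : ι → V) {x : V → ι → ℝ}
    (hx : ∀ v, x v ∈ stdSimplex ℝ ι) (hs : ∀ i, x (s i) i = 1) :
    ∃ A : ι → Finset V, (∀ i j, i ≠ j → Disjoint (A i) (A j)) ∧ univ.biUnion A = univ ∧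
      (∀ i, s i ∈ A i) ∧
      cutWeight E w A ≤
        2 * (1 - 1 / (Fintype.card ι : ℝ)) * ∑ i, lovasz (hypergraphSep E w r) fun v => x v i := by
  rcases subsingleton_or_nontrivial ι with hι | hι
  · have hcut : cutWeight E w (fun _ : ι => univ) = 0 := by
      refine sum_eq_zero fun e he => ?_
      obtain ⟨v, -⟩ := hE e (mem_filter.1 he).1
      obtain ⟨j⟩ := nonempty_of_mem_stdSimplex (hx v)
      exact absurd ⟨j, subset_univ e⟩ (mem_filter.1 he).2
    refine ⟨fun _ => univ, fun i j hij => (hij (Subsingleton.elim i j)).elim,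
      eq_univ_of_forall fun v => ?_, fun _ => mem_univ _, hcut ▸ ?_⟩
    · obtain ⟨j⟩ := nonempty_of_mem_stdSimplex (hx v)
      exact mem_biUnion.2 ⟨j, mem_univ j, mem_univ v⟩
    · have h1 : 1 / (Fintype.card ι : ℝ) ≤ 1 := by simpa using Nat.cast_inv_le_one _
      exact mul_nonneg (by linarith)
        (sum_nonneg fun i _ => lovasz_nonneg (hypergraphSep_nonneg E hw r) _)
  · obtain ⟨ℓ, θ, hθ, hle⟩ := exists_cutWeight_thresholdRounding_le hE hw hr hx
    exact ⟨thresholdRounding x θ ℓ, fun i j => disjoint_thresholdRounding hx hθ.1,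
      biUnion_thresholdRounding,
      fun i => mem_thresholdRounding_of_eq_one hx ⟨by linarith [hθ.1], hθ.2⟩ (hs i), hle⟩

theorem hypergraph_multiway_cut_integrality_gap_general
    {V : Type*} [Fintype V] [DecidableEq V]
    (E : Finset (Finset V)) (hE : ∀ e ∈ E, e.Nonempty)
    (w : Finset V → ℝ) (hw : ∀ e, 0 ≤ w e)
    (r : Finset V → V) (hr : ∀ e ∈ E, r e ∈ e)
    (k : ℕ) (s : Fin k → V)
    (x : V → Fin k → ℝ)
    (hx01 : ∀ v i, x v i ∈ Set.Icc (0:ℝ) 1)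
    (hxsum : ∀ v, ∑ i, x v i = 1)
    (hterm : ∀ i, x (s i) i = 1) :
    ∃ A : Fin k → Finset V,
      (∀ i j, i ≠ j → Disjoint (A i) (A j)) ∧
      (Finset.univ.biUnion A = Finset.univ) ∧
      (∀ i, s i ∈ A i) ∧
      ((∑ e ∈ E.filter (fun e => ¬ ∃ j : Fin k, e ⊆ A j), w e)
        ≤ 2 * (1 - 1 / (k : ℝ)) * ∑ i, lovasz (hypergraphSep E w r) (fun v => x v i)) := by
  have h := exists_partition_cutWeight_le hE hw hr s
    (fun v => ⟨fun i => (hx01 v i).1, hxsum v⟩) hterm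
  rw [Fintype.card_fin] at h
  -- the `Decidable` instance of `∃ j : Fin k` is not the generic one for a `Fintype`
  convert h using 6
  unfold cutWeight
  congr!

/-- **Integrality gap of `2(1 − 1/k)` for hypergraph multiway cut.**
Let `(V,E)` be a hypergraph with non-negative weights `w` and representatives
`r(e) ∈ e`, let `f` be the hypergraph separation cost function, let `s_1, …, s_k`
be distinct terminals, and let `x` be a fractional allocation with `x(s_i,i) = 1`.
Then there is a partition `(A_1, …, A_k)` of `V` with `s_i ∈ A_i` such that the
total weight of hyperedges not entirely contained in a single part is at most
`2(1 − 1/k) ∑_i f̂(x_i)`. -/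
theorem hypergraph_multiway_cut_integrality_gap
    {V : Type*} [Fintype V] [DecidableEq V]
    (E : Finset (Finset V)) (hE : ∀ e ∈ E, e.Nonempty)
    (w : Finset V → ℝ) (hw : ∀ e, 0 ≤ w e)
    (r : Finset V → V) (hr : ∀ e ∈ E, r e ∈ e)
    (k : ℕ) (s : Fin k → V) (hs : Function.Injective s)
    (x : V → Fin k → ℝ)
    (hx01 : ∀ v i, x v i ∈ Set.Icc (0:ℝ) 1)
    (hxsum : ∀ v, ∑ i, x v i = 1)
    (hterm : ∀ i, x (s i) i = 1) :
    ∃ A : Fin k → Finset V,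
      (∀ i j, i ≠ j → Disjoint (A i) (A j)) ∧
      (Finset.univ.biUnion A = Finset.univ) ∧
      (∀ i, s i ∈ A i) ∧
      ((∑ e ∈ E.filter (fun e => ¬ ∃ j : Fin k, e ⊆ A j), w e)
        ≤ 2 * (1 - 1 / (k : ℝ)) * ∑ i, lovasz (hypergraphSep E w r) (fun v => x v i)) :=
  hypergraph_multiway_cut_integrality_gap_general E hE w hw r hr k s x hx01 hxsum hterm
end

section
/- Let V be a finite set and let x be a fractional allocation on V. Let a ≠ b be indices in {1,…,k} and let s_a, s_b ∈ V satisfy x(s_a, a) = 1 and x(s_b, b) = 1. Let v_0 = s_a, v_1, …, v_{ℓ−1}, v_ℓ = s_b be vertices of V and let e_1, …, e_ℓ be nonempty hyperedges (subsets of V) such that {v_{j−1}, v_j} ⊆ e_j for each j = 1,…,ℓ. Then Σ_{j=1}^ℓ (1 − Σ_{i=1}^k min_{v ∈ e_j} x(v,i)) ≥ 1. -/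
open scoped BigOperators

lemma tel_abs (n : ℕ) (f : ℕ → ℝ) :
    |f 0 - f n| ≤ ∑ j ∈ Finset.range n, |f j - f (j + 1)| := by
  induction n with
  | zero => simp
  | succ n ih =>
    rw [Finset.sum_range_succ]
    calc |f 0 - f (n + 1)| ≤ |f 0 - f n| + |f n - f (n + 1)| := abs_sub_le _ _ _
    _ ≤ _ := by linarith

lemma zero_of_other_one {k : ℕ} (y : Fin k → ℝ)
    (h0 : ∀ i, 0 ≤ y i) (hsum : ∑ i, y i = 1) (i' : Fin k) (h1 : y i' = 1)
    (i : Fin k) (hne : i ≠ i') : y i = 0 := by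
  have h := Finset.add_sum_erase Finset.univ y (Finset.mem_univ i')
  rw [hsum, h1] at h
  have hz : ∑ j ∈ Finset.univ.erase i', y j = 0 := by linarith
  exact (Finset.sum_eq_zero_iff_of_nonneg (fun j _ => h0 j)).mp hz i
    (Finset.mem_erase.mpr ⟨hne, Finset.mem_univ i⟩)

/-- **Feasibility of the induced distances along a terminal-to-terminal path.**
Let `x` be a fractional allocation on a finite set `V`, let `a ≠ b` be labels with
`x(s_a,a) = 1` and `x(s_b,b) = 1`. If `v_0 = s_a, v_1, …, v_ℓ = s_b` are vertices
and `e_1, …, e_ℓ` are nonempty hyperedges with `{v_{j−1}, v_j} ⊆ e_j`, then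
`∑_{j=1}^ℓ (1 − ∑_{i=1}^k min_{v ∈ e_j} x(v,i)) ≥ 1`. -/
theorem path_distance_feasible
    {V : Type*} [Fintype V] [DecidableEq V]
    (k : ℕ) (x : V → Fin k → ℝ)
    (hx01 : ∀ v i, x v i ∈ Set.Icc (0:ℝ) 1)
    (hxsum : ∀ v, ∑ i, x v i = 1)
    (a b : Fin k) (hab : a ≠ b) (sa sb : V)
    (hsa : x sa a = 1) (hsb : x sb b = 1)
    (ℓ : ℕ) (v : Fin (ℓ + 1) → V) (e : Fin ℓ → Finset V)
    (hv0 : v 0 = sa) (hvl : v (Fin.last ℓ) = sb)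
    (hE : ∀ j : Fin ℓ, (e j).Nonempty)
    (hme : ∀ j : Fin ℓ, v j.castSucc ∈ e j ∧ v j.succ ∈ e j) :
    ∑ j : Fin ℓ, (1 - ∑ i, fmin (e j) (fun u => x u i)) ≥ 1 := by
  set D : V → V → ℝ := fun u w => (∑ i, |x u i - x w i|) / 2 with hD
  -- step bound
  have hstep : ∀ j : Fin ℓ,
      D (v j.castSucc) (v j.succ) ≤ 1 - ∑ i, fmin (e j) (fun u => x u i) := by
    intro j
    obtain ⟨hu, hw⟩ := hme j
    have h1 : ∑ i, fmin (e j) (fun u => x u i)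
        ≤ ∑ i, min (x (v j.castSucc) i) (x (v j.succ) i) := by
      apply Finset.sum_le_sum
      intro i _
      rw [fmin, dif_pos (hE j)]
      exact le_min (Finset.inf'_le _ hu) (Finset.inf'_le _ hw)
    have h2 : ∑ i, min (x (v j.castSucc) i) (x (v j.succ) i)
        = 1 - D (v j.castSucc) (v j.succ) := by
      have key : ∀ i, min (x (v j.castSucc) i) (x (v j.succ) i)
          = (x (v j.castSucc) i + x (v j.succ) i
              - |x (v j.castSucc) i - x (v j.succ) i|) / 2 := by
        intro i
        rcases le_total (x (v j.castSucc) i) (x (v j.succ) i) with h | h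
        · rw [min_eq_left h, abs_of_nonpos (by linarith)]; ring
        · rw [min_eq_right h, abs_of_nonneg (by linarith)]; ring
      rw [Finset.sum_congr rfl (fun i _ => key i), hD]
      rw [← Finset.sum_div, Finset.sum_sub_distrib, Finset.sum_add_distrib,
        hxsum, hxsum]
      ring
    linarith
  -- telescoping
  have htel : D (v 0) (v (Fin.last ℓ)) ≤ ∑ j : Fin ℓ, D (v j.castSucc) (v j.succ) := by
    rw [hD]
    simp only
    rw [← Finset.sum_div, div_le_div_iff_of_pos_right (by norm_num : (0:ℝ) < 2)]
    rw [Finset.sum_comm]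
    apply Finset.sum_le_sum
    intro i _
    set f : ℕ → ℝ := fun m => x (v ⟨min m ℓ, by omega⟩) i with hf
    have e0 : x (v 0) i = f 0 := by
      have : (⟨0 ⊓ ℓ, by omega⟩ : Fin (ℓ + 1)) = 0 := by ext; simp
      simp only [hf, this]
    have el : x (v (Fin.last ℓ)) i = f ℓ := by
      simp only [hf, min_self]
      rfl
    have ej : ∀ j : Fin ℓ,
        |x (v j.castSucc) i - x (v j.succ) i| = |f j.val - f (j.val + 1)| := by
      intro j
      have hc : (⟨min j.val ℓ, by omega⟩ : Fin (ℓ + 1)) = j.castSucc := by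
        ext; simp [Nat.min_eq_left (le_of_lt j.isLt)]
      have hs : (⟨min (j.val + 1) ℓ, by omega⟩ : Fin (ℓ + 1)) = j.succ := by
        ext; simp [Nat.min_eq_left (Nat.succ_le_of_lt j.isLt)]
      simp only [hf, hc, hs]
    calc |x (v 0) i - x (v (Fin.last ℓ)) i| = |f 0 - f ℓ| := by rw [e0, el]
    _ ≤ ∑ j ∈ Finset.range ℓ, |f j - f (j + 1)| := tel_abs ℓ f
    _ = ∑ j : Fin ℓ, |f j.val - f (j.val + 1)| :=
        (Fin.sum_univ_eq_sum_range (fun m => |f m - f (m + 1)|) ℓ).symm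
    _ = ∑ j : Fin ℓ, |x (v j.castSucc) i - x (v j.succ) i| := by
        exact Finset.sum_congr rfl (fun j _ => (ej j).symm)
  -- endpoint bound
  have hend : (1 : ℝ) ≤ D (v 0) (v (Fin.last ℓ)) := by
    rw [hv0, hvl, hD]
    have hxa : x sb a = 0 := zero_of_other_one (x sb) (fun i => (hx01 sb i).1)
      (hxsum sb) b hsb a hab
    have hxb : x sa b = 0 := zero_of_other_one (x sa) (fun i => (hx01 sa i).1)
      (hxsum sa) a hsa b hab.symm
    have hsub : ∑ i ∈ ({a, b} : Finset (Fin k)), |x sa i - x sb i|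
        ≤ ∑ i, |x sa i - x sb i| :=
      Finset.sum_le_sum_of_subset_of_nonneg (Finset.subset_univ _)
        (fun i _ _ => abs_nonneg _)
    rw [Finset.sum_pair hab, hsa, hsb, hxa, hxb] at hsub
    have : |(1:ℝ) - 0| + |0 - (1:ℝ)| = 2 := by norm_num
    rw [this] at hsub
    linarith
  calc (1:ℝ) ≤ D (v 0) (v (Fin.last ℓ)) := hend
  _ ≤ ∑ j : Fin ℓ, D (v j.castSucc) (v j.succ) := htel
  _ ≤ ∑ j : Fin ℓ, (1 - ∑ i, fmin (e j) (fun u => x u i)) :=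
      Finset.sum_le_sum (fun j _ => hstep j)
end

section
/- Let e be a finite nonempty set of vertices with a designated representative r(e) ∈ e and |e| ≤ Δ, and let x : e × {1,…,k} → [0,1] satisfy Σ_{i=1}^k x(v,i) = 1 for every v ∈ e. Let d(e) = Σ_{i=1}^k (x(r(e),i) − min_{v ∈ e} x(v,i)). Then (a) Σ_{i=1}^k (max_{v ∈ e} x(v,i) − min_{v ∈ e} x(v,i)) ≤ Δ · d(e), and (b) Σ_{i=1}^k max_{v ∈ e} x(v,i) ≥ 1. Consequently, if a label i is chosen uniformly at random from {1,…,k} and θ uniformly at random from [0,1], the probability that θ ∈ [min_{v ∈ e} x(v,i), max_{v ∈ e} x(v,i)] is at most Δ · d(e) times the probability that θ ≤ max_{v ∈ e} x(v,i); hence the probability that a hyperedge e is split in one iteration of the Kleinberg–Tardos rounding, conditioned on e being touched in that iteration, is at most Δ · d(e). -/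
open scoped BigOperators

/-- **Kleinberg–Tardos split bound for a hyperedge.**
Let `e` be a finite nonempty set with representative `r(e) ∈ e` and `|e| ≤ Δ`, and
let `x : e × {1,…,k} → [0,1]` with `∑_i x(v,i) = 1` for all `v ∈ e`. Let
`d(e) = ∑_i (x(r(e),i) − min_{v∈e} x(v,i))`. Then
(a) `∑_i (max_{v∈e} x(v,i) − min_{v∈e} x(v,i)) ≤ Δ · d(e)`;
(b) `∑_i max_{v∈e} x(v,i) ≥ 1`; and consequently, for a uniformly random label `i`
and uniformly random `θ ∈ [0,1]`, the probability that
`θ ∈ [min_{v∈e} x(v,i), max_{v∈e} x(v,i)]` is at most `Δ · d(e)` times the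
probability that `θ ≤ max_{v∈e} x(v,i)` — i.e. the probability that `e` is split
in one iteration of KT rounding, conditioned on being touched, is at most `Δ d(e)`. -/
theorem kt_split_bound
    {V : Type*} [DecidableEq V] (e : Finset V) (he : e.Nonempty)
    (re : V) (hre : re ∈ e) (Δ : ℕ) (hΔ : e.card ≤ Δ)
    (k : ℕ) (x : V → Fin k → ℝ)
    (hx01 : ∀ v ∈ e, ∀ i, x v i ∈ Set.Icc (0:ℝ) 1)
    (hxsum : ∀ v ∈ e, ∑ i, x v i = 1) :
    (∑ i, (fmax e (fun v => x v i) - fmin e (fun v => x v i))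
        ≤ (Δ : ℝ) * ∑ i, (x re i - fmin e (fun v => x v i))) ∧
    (1 ≤ ∑ i, fmax e (fun v => x v i)) ∧
    ((1 / (k : ℝ)) * ∑ i, (fmax e (fun v => x v i) - fmin e (fun v => x v i))
        ≤ ((Δ : ℝ) * ∑ i, (x re i - fmin e (fun v => x v i)))
          * ((1 / (k : ℝ)) * ∑ i, fmax e (fun v => x v i))) := by

  have hM : ∀ (i : Fin k), ∀ v ∈ e, x v i ≤ fmax e (fun v => x v i) := by
    intro i v hv
    simp only [fmax, dif_pos he]
    exact Finset.le_sup' (fun w => x w i) hv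
  have hm : ∀ (i : Fin k), ∀ v ∈ e, fmin e (fun v => x v i) ≤ x v i := by
    intro i v hv
    simp only [fmin, dif_pos he]
    exact Finset.inf'_le (fun w => x w i) hv
  have hD : 0 ≤ ∑ i, (x re i - fmin e (fun v => x v i)) :=
    Finset.sum_nonneg fun i _ => sub_nonneg.2 (hm i re hre)
  have ha : ∑ i, (fmax e (fun v => x v i) - fmin e (fun v => x v i))
      ≤ (Δ : ℝ) * ∑ i, (x re i - fmin e (fun v => x v i)) := by
    have h1 : ∀ i : Fin k, fmax e (fun v => x v i) - fmin e (fun v => x v i)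
        ≤ ∑ v ∈ e, (x v i - fmin e (fun v => x v i)) := by
      intro i
      obtain ⟨v, hv, hvmax⟩ := Finset.exists_mem_eq_sup' he (fun v => x v i)
      have hMv : fmax e (fun v => x v i) = x v i := by
        simp only [fmax, dif_pos he]; exact hvmax
      rw [hMv]
      exact Finset.single_le_sum (fun w hw => sub_nonneg.2 (hm i w hw)) hv
    calc ∑ i, (fmax e (fun v => x v i) - fmin e (fun v => x v i))
        ≤ ∑ i : Fin k, ∑ v ∈ e, (x v i - fmin e (fun v => x v i)) :=
          Finset.sum_le_sum fun i _ => h1 i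
      _ = ∑ v ∈ e, ∑ i : Fin k, (x v i - fmin e (fun v => x v i)) :=
          Finset.sum_comm
      _ = ∑ v ∈ e, ∑ i : Fin k, (x re i - fmin e (fun v => x v i)) := by
          refine Finset.sum_congr rfl fun v hv => ?_
          rw [Finset.sum_sub_distrib, Finset.sum_sub_distrib, hxsum v hv,
            hxsum re hre]
      _ = (e.card : ℝ) * ∑ i, (x re i - fmin e (fun v => x v i)) := by
          rw [Finset.sum_const, nsmul_eq_mul]
      _ ≤ (Δ : ℝ) * ∑ i, (x re i - fmin e (fun v => x v i)) := by
          exact mul_le_mul_of_nonneg_right (by exact_mod_cast hΔ) hD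
  have hb : 1 ≤ ∑ i, fmax e (fun v => x v i) := by
    calc (1 : ℝ) = ∑ i, x re i := (hxsum re hre).symm
      _ ≤ ∑ i, fmax e (fun v => x v i) :=
          Finset.sum_le_sum fun i _ => hM i re hre
  refine ⟨ha, hb, ?_⟩
  have hk : (0 : ℝ) ≤ 1 / (k : ℝ) := by positivity
  have hDΔ : 0 ≤ (Δ : ℝ) * ∑ i, (x re i - fmin e (fun v => x v i)) :=
    mul_nonneg (Nat.cast_nonneg _) hD
  nlinarith [mul_le_mul_of_nonneg_left ha hk,
    mul_le_mul_of_nonneg_left hb hDΔ]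
end
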